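/- arXiv:1403.3308 — 7 statements merged into one kernel-verified Lean document; each statement's English description precedes it below -/
import Mathlib

section
/- In the Matsuo algebra A = A^α_3(G,D) of a 3-transposition group (G,D), for any d ∈ D, the element d^ρ multiplied by the sum Σ_{c∈D} c^ρ equals (1 + (α/2)·|N_D(d)|)·d^ρ, where N_D(d) = {c ∈ D : [c,d] ≠ 1}. -/
/-!
Split the sum according to whether `c` commutes with `d`. Among the commuting `c` only `c = d`
contributes, giving `d^ρ`. For `c ∈ N_D(d)` the product is `(α/2)(c^ρ + d^ρ - (c^d)^ρ)`; since
`c ↦ c^d` is an involution of `N_D(d)`, the terms `c^ρ` and `(c^d)^ρ` cancel in the sum, leaving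
`(α/2)|N_D(d)| d^ρ`.
-/

open Finset

theorem Finset.sum_comp_of_involutive_on {α M : Type*} [AddCommMonoid M] (s : Finset α)
    (σ : α → α) (f : α → M) (hσ : ∀ a ∈ s, σ a ∈ s) (hσσ : ∀ a ∈ s, σ (σ a) = a) :
    ∑ a ∈ s, f (σ a) = ∑ a ∈ s, f a :=
  sum_nbij' σ σ hσ hσ hσσ hσσ fun _ _ => rfl

theorem commute_inv_mul_mul_iff {G : Type*} [Group G] (c g : G) :
    Commute (g⁻¹ * c * g) g ↔ Commute c g := by
  simpa using Commute.conj_iff (a := c) (b := g) g⁻¹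

theorem inv_mul_inv_mul_mul_mul_of_mul_self_eq_one {G : Type*} [Group G] {d : G}
    (hdd : d * d = 1) (c : G) : d⁻¹ * (d⁻¹ * c * d) * d = c := by
  calc d⁻¹ * (d⁻¹ * c * d) * d = (d * d)⁻¹ * c * (d * d) := by group
    _ = c := by rw [hdd, inv_one, one_mul, mul_one]

section Matsuo

open scoped Classical

variable {G A : Type*} [Group G] [NonUnitalNonAssocCommRing A] (D : Finset G) (ρ : G → A) {d : G}

theorem mul_sum_filter_commute (hd : d ∈ D) (hmul_self : ρ d * ρ d = ρ d)
    (hmul_comm : ∀ c ∈ D, c ≠ d → Commute c d → ρ c * ρ d = 0) :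
    ρ d * ∑ c ∈ D.filter (Commute · d), ρ c = ρ d := by
  rw [mul_sum, sum_eq_single_of_mem d (by simpa using hd) ?_]
  · exact hmul_self
  · intro c hc hcd
    rw [mem_filter] at hc
    rw [mul_comm]
    exact hmul_comm c hc.1 hcd hc.2

theorem sum_conj_filter_not_commute {M : Type*} [AddCommMonoid M] (f : G → M)
    (hdd : d * d = 1) (hnorm : ∀ c ∈ D, d⁻¹ * c * d ∈ D) :
    ∑ c ∈ D.filter (¬Commute · d), f (d⁻¹ * c * d) = ∑ c ∈ D.filter (¬Commute · d), f c := by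
  refine sum_comp_of_involutive_on _ _ f (fun c hc => ?_)
    fun c _ => inv_mul_inv_mul_mul_mul_of_mul_self_eq_one hdd c
  rw [mem_filter] at hc
  rw [mem_filter, commute_inv_mul_mul_iff]
  exact ⟨hnorm c hc.1, hc.2⟩

theorem mul_sum_filter_not_commute [Module ℚ A] (α : ℚ) (hdd : d * d = 1)
    (hnorm : ∀ c ∈ D, d⁻¹ * c * d ∈ D)
    (hmul_ncomm : ∀ c ∈ D, ¬Commute c d → ρ c * ρ d = (α/2) • (ρ c + ρ d - ρ (d⁻¹ * c * d))) :
    ρ d * ∑ c ∈ D.filter (¬Commute · d), ρ c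
      = ((α/2) * ((D.filter (¬Commute · d)).card : ℚ)) • ρ d := by
  have hterm : ∀ c ∈ D.filter (¬Commute · d),
      ρ d * ρ c = (α/2) • (ρ c + ρ d - ρ (d⁻¹ * c * d)) := fun c hc => by
    rw [mem_filter] at hc
    rw [mul_comm]
    exact hmul_ncomm c hc.1 hc.2
  rw [mul_sum, sum_congr rfl hterm, ← smul_sum, sum_sub_distrib, sum_add_distrib,
    sum_conj_filter_not_commute D ρ hdd hnorm, sum_const, add_sub_cancel_left,
    ← Nat.cast_smul_eq_nsmul ℚ, smul_smul]

end Matsuo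

open scoped Classical in
theorem matsuo_mul_sum_general {G A : Type*} [Group G]
    [NonUnitalNonAssocCommRing A] [Module ℚ A]
    (D : Finset G) (α : ℚ) (ρ : G → A)
    (hinv : ∀ d ∈ D, d * d = 1)
    (hnorm : ∀ c ∈ D, ∀ g : G, g⁻¹ * c * g ∈ D)
    (hmul_self : ∀ d ∈ D, ρ d * ρ d = ρ d)
    (hmul_comm : ∀ c ∈ D, ∀ d ∈ D, c ≠ d → Commute c d → ρ c * ρ d = 0)
    (hmul_ncomm : ∀ c ∈ D, ∀ d ∈ D, ¬ Commute c d →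
      ρ c * ρ d = (α/2) • (ρ c + ρ d - ρ (d⁻¹ * c * d)))
    (d : G) (hd : d ∈ D) :
    ρ d * (∑ c ∈ D, ρ c)
      = (1 + (α/2) * ((D.filter fun c => ¬ Commute c d).card : ℚ)) • ρ d := by
  have hnorm_d : ∀ c ∈ D, d⁻¹ * c * d ∈ D := fun c hc => hnorm c hc d
  rw [← sum_filter_add_sum_filter_not D (Commute · d), mul_add,
    mul_sum_filter_commute D ρ hd (hmul_self d hd) fun c hc => hmul_comm c hc d hd,
    mul_sum_filter_not_commute D ρ α (hinv d hd) hnorm_d fun c hc => hmul_ncomm c hc d hd,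
    add_smul, one_smul]

open scoped Classical in
/-- in the Matsuo algebra `A^α_3(G,D)` of a 3-transposition group `(G,D)`,
for `d ∈ D` we have `d^ρ · Σ_{c ∈ D} c^ρ = (1 + (α/2)|N_D(d)|) d^ρ`. -/
theorem matsuo_mul_sum {G A : Type*} [Group G]
    [NonUnitalNonAssocCommRing A] [Module ℚ A] [SMulCommClass ℚ A A] [IsScalarTower ℚ A A]
    (D : Finset G) (α : ℚ) (hα0 : α ≠ 0) (hα1 : α ≠ 1) (ρ : G → A)
    (hinv : ∀ d ∈ D, d * d = 1) (hne1 : ∀ d ∈ D, d ≠ 1)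
    (hgen : Subgroup.closure (D : Set G) = ⊤)
    (hnorm : ∀ c ∈ D, ∀ g : G, g⁻¹ * c * g ∈ D)
    (h3trans : ∀ c ∈ D, ∀ d ∈ D, orderOf (c * d) ≤ 3)
    (hmul_self : ∀ d ∈ D, ρ d * ρ d = ρ d)
    (hmul_comm : ∀ c ∈ D, ∀ d ∈ D, c ≠ d → Commute c d → ρ c * ρ d = 0)
    (hmul_ncomm : ∀ c ∈ D, ∀ d ∈ D, ¬ Commute c d →
      ρ c * ρ d = (α/2) • (ρ c + ρ d - ρ (d⁻¹ * c * d)))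
    (d : G) (hd : d ∈ D) :
    ρ d * (∑ c ∈ D, ρ c)
      = (1 + (α/2) * ((D.filter fun c => ¬ Commute c d).card : ℚ)) • ρ d :=
  matsuo_mul_sum_general D α ρ hinv hnorm hmul_self hmul_comm hmul_ncomm d hd
end

section
/- If (G,D) is a k-regular 3-transposition group (i.e., |N_D(d)| = k for all d ∈ D), then the Matsuo algebra A^α_3(G,D) has identity element id_A = (1 + αk/2)^{-1} · Σ_{d∈D} d^ρ, provided 1 + αk/2 ≠ 0. -/
/-!
Write `S = ∑_{c ∈ D} c^ρ` and fix `d ∈ D`. In `S · d^ρ` the transpositions commuting with `d`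
contribute only `d^ρ` (from `c = d`), and each of the `k` transpositions `c` not commuting with `d`
contributes `(α/2)(c^ρ + d^ρ - (c^d)^ρ)`. Conjugation by `d` permutes the latter set, so the
terms `c^ρ` and `(c^d)^ρ` cancel in the sum, leaving `S · d^ρ = (1 + αk/2) d^ρ`. As the `d^ρ`
span `A`, left multiplication by `(1 + αk/2)⁻¹ S` is the identity.
-/

open Finset

section Conjugation

variable {G : Type*} [Group G]

theorem commute_conj_self_iff (c d : G) : Commute (d⁻¹ * c * d) d ↔ Commute c d := by
  simpa [mul_assoc] using Commute.conj_iff (a := c) (b := d) d⁻¹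

theorem conj_mem_iff_of_forall_conj_mem {D : Finset G} (hD : ∀ c ∈ D, ∀ g : G, g⁻¹ * c * g ∈ D)
    (c g : G) : g⁻¹ * c * g ∈ D ↔ c ∈ D := by
  refine ⟨fun h => ?_, fun h => hD c h g⟩
  simpa [mul_assoc] using hD _ h g⁻¹

theorem sum_conj_eq_of_conj_mem_iff {M : Type*} [AddCommMonoid M] {s : Finset G} {g : G}
    (hs : ∀ c, g⁻¹ * c * g ∈ s ↔ c ∈ s) (f : G → M) :
    ∑ c ∈ s, f (g⁻¹ * c * g) = ∑ c ∈ s, f c :=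
  sum_equiv (MulAut.conj g⁻¹).toEquiv (fun c => by simp [hs]) (fun c _ => by simp)

end Conjugation

section Matsuo

open scoped Classical

variable {G A : Type*} [Group G] {D : Finset G} {ρ : G → A} {d : G}

theorem sum_filter_commute_mul [NonUnitalNonAssocSemiring A] (hd : d ∈ D)
    (hmul_self : ∀ d ∈ D, ρ d * ρ d = ρ d)
    (hmul_comm : ∀ c ∈ D, ∀ d ∈ D, c ≠ d → Commute c d → ρ c * ρ d = 0) :
    ∑ c ∈ D.filter (fun c => Commute c d), ρ c * ρ d = ρ d := by
  rw [sum_eq_single_of_mem d (by simp [hd]), hmul_self d hd]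
  intro c hc hcd
  rw [mem_filter] at hc
  exact hmul_comm c hc.1 d hd hcd hc.2

variable [NonUnitalNonAssocRing A] [Module ℚ A]

theorem sum_filter_not_commute_mul (α : ℚ) (hd : d ∈ D)
    (hnorm : ∀ c ∈ D, ∀ g : G, g⁻¹ * c * g ∈ D)
    (hmul_ncomm : ∀ c ∈ D, ∀ d ∈ D, ¬ Commute c d →
      ρ c * ρ d = (α/2) • (ρ c + ρ d - ρ (d⁻¹ * c * d))) :
    ∑ c ∈ D.filter (fun c => ¬ Commute c d), ρ c * ρ d =
      (α * (D.filter fun c => ¬ Commute c d).card / 2) • ρ d := by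
  set T := D.filter fun c => ¬ Commute c d
  have hT : ∀ c, d⁻¹ * c * d ∈ T ↔ c ∈ T := fun c => by
    simp only [T, mem_filter, commute_conj_self_iff, conj_mem_iff_of_forall_conj_mem hnorm]
  calc ∑ c ∈ T, ρ c * ρ d
      = ∑ c ∈ T, (α/2) • (ρ c + ρ d - ρ (d⁻¹ * c * d)) :=
        sum_congr rfl fun c hc => hmul_ncomm c (mem_filter.mp hc).1 d hd (mem_filter.mp hc).2
    _ = (α/2) • (∑ c ∈ T, ρ c + T.card • ρ d - ∑ c ∈ T, ρ (d⁻¹ * c * d)) := by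
        rw [← smul_sum, sum_sub_distrib, sum_add_distrib, sum_const]
    _ = (α * T.card / 2) • ρ d := by
        rw [sum_conj_eq_of_conj_mem_iff hT, add_sub_cancel_left, ← Nat.cast_smul_eq_nsmul ℚ,
          smul_smul]
        congr 1
        ring

theorem sum_mul_eq_of_card_filter_not_commute (α : ℚ) (k : ℕ) (hd : d ∈ D)
    (hnorm : ∀ c ∈ D, ∀ g : G, g⁻¹ * c * g ∈ D)
    (hmul_self : ∀ d ∈ D, ρ d * ρ d = ρ d)
    (hmul_comm : ∀ c ∈ D, ∀ d ∈ D, c ≠ d → Commute c d → ρ c * ρ d = 0)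
    (hmul_ncomm : ∀ c ∈ D, ∀ d ∈ D, ¬ Commute c d →
      ρ c * ρ d = (α/2) • (ρ c + ρ d - ρ (d⁻¹ * c * d)))
    (hk : (D.filter fun c => ¬ Commute c d).card = k) :
    (∑ c ∈ D, ρ c) * ρ d = (1 + α * k / 2) • ρ d := by
  rw [sum_mul, ← sum_filter_add_sum_filter_not D (fun c => Commute c d),
    sum_filter_commute_mul hd hmul_self hmul_comm, sum_filter_not_commute_mul α hd hnorm hmul_ncomm,
    hk, add_smul, one_smul]

end Matsuo

open scoped Classical in
theorem matsuo_identity_general {G A : Type*} [Group G]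
    [NonUnitalNonAssocCommRing A] [Module ℚ A] [SMulCommClass ℚ A A] [IsScalarTower ℚ A A]
    (D : Finset G) (α : ℚ) (ρ : G → A)
    (hnorm : ∀ c ∈ D, ∀ g : G, g⁻¹ * c * g ∈ D)
    (hmul_self : ∀ d ∈ D, ρ d * ρ d = ρ d)
    (hmul_comm : ∀ c ∈ D, ∀ d ∈ D, c ≠ d → Commute c d → ρ c * ρ d = 0)
    (hmul_ncomm : ∀ c ∈ D, ∀ d ∈ D, ¬ Commute c d →
      ρ c * ρ d = (α/2) • (ρ c + ρ d - ρ (d⁻¹ * c * d)))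
    (hspan : Submodule.span ℚ (ρ '' (D : Set G)) = ⊤)
    (k : ℕ) (hreg : ∀ d ∈ D, (D.filter fun c => ¬ Commute c d).card = k)
    (hden : 1 + α * k / 2 ≠ 0) :
    ∀ a : A, ((1 + α * k / 2)⁻¹ • ∑ d ∈ D, ρ d) * a = a := by
  have hid : LinearMap.mulLeft ℚ ((1 + α * k / 2)⁻¹ • ∑ d ∈ D, ρ d) = LinearMap.id := by
    refine LinearMap.ext_on hspan ?_
    rintro _ ⟨d, hd, rfl⟩
    rw [LinearMap.mulLeft_apply, LinearMap.id_apply, smul_mul_assoc,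
      sum_mul_eq_of_card_filter_not_commute α k hd hnorm hmul_self hmul_comm hmul_ncomm
        (hreg d hd), smul_smul, inv_mul_cancel₀ hden, one_smul]
  exact LinearMap.congr_fun hid

open scoped Classical in
/-- if the 3-transposition group `(G,D)` is `k`-regular and `1 + αk/2 ≠ 0`,
then `(1 + αk/2)⁻¹ Σ_{d ∈ D} d^ρ` is an identity element of the Matsuo algebra
`A^α_3(G,D)` (the algebra spanned by the `d^ρ`). -/
theorem matsuo_identity {G A : Type*} [Group G]
    [NonUnitalNonAssocCommRing A] [Module ℚ A] [SMulCommClass ℚ A A] [IsScalarTower ℚ A A]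
    (D : Finset G) (α : ℚ) (hα0 : α ≠ 0) (hα1 : α ≠ 1) (ρ : G → A)
    (hinv : ∀ d ∈ D, d * d = 1) (hne1 : ∀ d ∈ D, d ≠ 1)
    (hgen : Subgroup.closure (D : Set G) = ⊤)
    (hnorm : ∀ c ∈ D, ∀ g : G, g⁻¹ * c * g ∈ D)
    (h3trans : ∀ c ∈ D, ∀ d ∈ D, orderOf (c * d) ≤ 3)
    (hmul_self : ∀ d ∈ D, ρ d * ρ d = ρ d)
    (hmul_comm : ∀ c ∈ D, ∀ d ∈ D, c ≠ d → Commute c d → ρ c * ρ d = 0)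
    (hmul_ncomm : ∀ c ∈ D, ∀ d ∈ D, ¬ Commute c d →
      ρ c * ρ d = (α/2) • (ρ c + ρ d - ρ (d⁻¹ * c * d)))
    (hspan : Submodule.span ℚ (ρ '' (D : Set G)) = ⊤)
    (k : ℕ) (hreg : ∀ d ∈ D, (D.filter fun c => ¬ Commute c d).card = k)
    (hden : 1 + α * k / 2 ≠ 0) :
    ∀ a : A, ((1 + α * k / 2)⁻¹ • ∑ d ∈ D, ρ d) * a = a :=
  matsuo_identity_general D α ρ hnorm hmul_self hmul_comm hmul_ncomm hspan k hreg hden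
end

section
/- With E the transpositions of Sym(m) embedded in Sym(n), S = {1,...,m} the support, and z > m a fixed point: for any transposition (a b) ∈ E, one has (a b)^ρ · Σ_{c∈S} (c z)^ρ = α·(a b)^ρ in the Matsuo algebra A^α_3(Sym(n)). Consequently id_E · (Σ_{c∈S} (c z)^ρ - α·id_E) = 0, i.e., Σ_{c∈S}(c z)^ρ - α·id_E is a 0-eigenvector of id_E. -/
/-!
For distinct `x, y, w`, `ρ(x y) ρ(c w)` vanishes when `c ∉ {x, y, w}` (disjoint transpositions),
and the two remaining products `(α/2)(ρ(x y) + ρ(x w) - ρ(y w))` and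
`(α/2)(ρ(x y) + ρ(y w) - ρ(x w))` add up to `α ρ(x y)`; this is the first claim. In
`ρ(x y) · Σ_{e ∈ E} ρ e` the transpositions disjoint from `(x y)` contribute nothing, `(x y)`
contributes `ρ(x y)`, and each pair `(x c), (y c)` contributes `α ρ(x y)`, so `id_E` acts as an
identity on every `ρ e`, `e ∈ E`. Hence `id_E · Σ_c ρ(c z) = α id_E = α id_E²`.
-/

open Finset Equiv

section swapsOn

variable {β : Type*} [Fintype β] [DecidableEq β] {T : Finset β}

open scoped Classical in
noncomputable def swapsOn (T : Finset β) : Finset (Perm β) :=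
  univ.filter fun g => g.IsSwap ∧ ∀ x ∉ T, g x = x

lemma mem_swapsOn {g : Perm β} :
    g ∈ swapsOn T ↔ ∃ x ∈ T, ∃ y ∈ T, x ≠ y ∧ g = swap x y := by
  simp only [swapsOn, mem_filter, mem_univ, true_and]
  constructor
  · rintro ⟨⟨x, y, hxy, rfl⟩, hfix⟩
    refine ⟨x, ?_, y, ?_, hxy, rfl⟩ <;> by_contra h
    · exact hxy (swap_apply_left x y ▸ hfix x h).symm
    · exact hxy (swap_apply_right x y ▸ hfix y h)
  · rintro ⟨x, hx, y, hy, hxy, rfl⟩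
    exact ⟨⟨x, y, hxy, rfl⟩, fun w hw =>
      swap_apply_of_ne_of_ne (ne_of_mem_of_not_mem hx hw).symm (ne_of_mem_of_not_mem hy hw).symm⟩

lemma swapsOn_insert {w : β} (hw : w ∉ T) :
    swapsOn (insert w T) = swapsOn T ∪ T.image (swap w) := by
  ext g
  simp only [mem_union, mem_swapsOn, mem_insert, mem_image]
  constructor
  · rintro ⟨x, hx, y, hy, hxy, rfl⟩
    grind [swap_comm]
  · grind

lemma sum_swapsOn_insert {M : Type*} [AddCommMonoid M] (f : Perm β → M) {w : β} (hw : w ∉ T) :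
    ∑ g ∈ swapsOn (insert w T), f g = ∑ g ∈ swapsOn T, f g + ∑ c ∈ T, f (swap w c) := by
  rw [swapsOn_insert hw, sum_union, sum_image fun _ _ _ _ h => swap_injective_of_left w h]
  rw [disjoint_left]
  rintro g hg hg'
  obtain ⟨c, hc, rfl⟩ := mem_image.mp hg'
  obtain ⟨x, hx, y, hy, hxy, hg⟩ := mem_swapsOn.mp hg
  have : swap w c w = swap x y w := by rw [hg]
  grind [swap_apply_of_ne_of_ne, swap_apply_left]

end swapsOn

structure IsMatsuoProduct {K β A : Type*} [Field K] [DecidableEq β] [NonUnitalNonAssocCommRing A]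
    [Module K A] (α : K) (ρ : Perm β → A) : Prop where
  mul_self : ∀ d : Perm β, d.IsSwap → ρ d * ρ d = ρ d
  mul_eq_zero_of_commute : ∀ c d : Perm β, c.IsSwap → d.IsSwap → c ≠ d → Commute c d →
    ρ c * ρ d = 0
  mul_of_not_commute : ∀ c d : Perm β, c.IsSwap → d.IsSwap → ¬ Commute c d →
    ρ c * ρ d = (α / 2) • (ρ c + ρ d - ρ (d⁻¹ * c * d))

lemma not_commute_swap_swap {β : Type*} [DecidableEq β] {x y w : β} (hxy : x ≠ y)
    (hxw : x ≠ w) (hyw : y ≠ w) : ¬ Commute (swap x y) (swap x w) := fun h => by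
  have := congr($h.eq w)
  simp only [Perm.mul_apply, swap_apply_right, swap_apply_left,
    swap_apply_of_ne_of_ne hxw.symm hyw.symm] at this
  exact hxy this.symm

namespace IsMatsuoProduct

variable {K β A : Type*} [Field K] [DecidableEq β] [NonUnitalNonAssocCommRing A] [Module K A]
  {α : K} {ρ : Perm β → A}

lemma mul_swap_swap_eq_zero (h : IsMatsuoProduct α ρ) {x y u v : β} (hn : [x, y, u, v].Nodup) :
    ρ (swap x y) * ρ (swap u v) = 0 := by
  have hd := Perm.disjoint_swap_swap hn
  simp only [List.nodup_cons, List.mem_cons, List.not_mem_nil, or_false] at hn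
  refine h.mul_eq_zero_of_commute _ _ ⟨x, y, by grind, rfl⟩ ⟨u, v, by grind, rfl⟩
    (fun he => ?_) hd.commute
  have := congr($he x)
  rw [swap_apply_left, swap_apply_of_ne_of_ne (by grind) (by grind)] at this
  grind

lemma mul_swap_swap (h : IsMatsuoProduct α ρ) {x y w : β} (hxy : x ≠ y) (hxw : x ≠ w)
    (hyw : y ≠ w) :
    ρ (swap x y) * ρ (swap x w) =
      (α / 2) • (ρ (swap x y) + ρ (swap x w) - ρ (swap y w)) := by
  have hconj : (swap x w)⁻¹ * swap x y * swap x w = swap y w := by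
    rw [swap_inv, swap_comm x y, swap_mul_swap_mul_swap hxy.symm hyw, swap_comm]
  rw [h.mul_of_not_commute _ _ ⟨x, y, hxy, rfl⟩ ⟨x, w, hxw, rfl⟩
    (not_commute_swap_swap hxy hxw hyw), hconj]

lemma mul_swap_add_swap [NeZero (2 : K)] (h : IsMatsuoProduct α ρ) {x y w : β} (hxy : x ≠ y)
    (hxw : x ≠ w) (hyw : y ≠ w) :
    ρ (swap x y) * (ρ (swap x w) + ρ (swap y w)) = α • ρ (swap x y) := by
  rw [mul_add, h.mul_swap_swap hxy hxw hyw, swap_comm x y, h.mul_swap_swap hxy.symm hyw hxw,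
    swap_comm y x]
  conv_rhs => rw [← add_halves α]
  module

lemma mul_sum_swap_of_notMem [NeZero (2 : K)] (h : IsMatsuoProduct α ρ) {T : Finset β}
    {x y w : β} (hxy : x ≠ y) (hx : x ∈ T) (hy : y ∈ T) (hw : w ∉ T) :
    ρ (swap x y) * ∑ c ∈ T, ρ (swap c w) = α • ρ (swap x y) := by
  have hxw := ne_of_mem_of_not_mem hx hw
  have hyw := ne_of_mem_of_not_mem hy hw
  have hsub : {x, y} ⊆ T := insert_subset hx (singleton_subset_iff.mpr hy)
  rw [mul_sum, ← sum_subset hsub, sum_pair hxy, ← mul_add, h.mul_swap_add_swap hxy hxw hyw]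
  intro c hc hcxy
  exact h.mul_swap_swap_eq_zero (by grind [List.nodup_cons])

variable [Fintype β]

lemma mul_sum_swapsOn_eq_zero (h : IsMatsuoProduct α ρ) {T : Finset β} {x y : β} (hxy : x ≠ y)
    (hx : x ∉ T) (hy : y ∉ T) : ρ (swap x y) * ∑ g ∈ swapsOn T, ρ g = 0 := by
  rw [mul_sum]
  refine sum_eq_zero fun g hg => ?_
  obtain ⟨u, hu, v, hv, huv, rfl⟩ := mem_swapsOn.mp hg
  exact h.mul_swap_swap_eq_zero (by grind [List.nodup_cons])

lemma mul_sum_swapsOn [NeZero (2 : K)] (h : IsMatsuoProduct α ρ) {T : Finset β} {x y : β}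
    (hxy : x ≠ y) (hx : x ∈ T) (hy : y ∈ T) :
    ρ (swap x y) * ∑ g ∈ swapsOn T, ρ g = (1 + α * ((#T : K) - 2)) • ρ (swap x y) := by
  set T' := (T.erase x).erase y
  have hyT' : y ∉ T' := notMem_erase y _
  have hxT' : x ∉ insert y T' := by simp [T', hxy]
  have hT : T = insert x (insert y T') := by
    rw [insert_erase (mem_erase.mpr ⟨hxy.symm, hy⟩), insert_erase hx]
  have hcard : #T = #T' + 2 := by rw [hT, card_insert_of_notMem hxT', card_insert_of_notMem hyT']
  have hpair : ∀ c ∈ T',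
      ρ (swap x y) * (ρ (swap y c) + ρ (swap x c)) = α • ρ (swap x y) := by
    intro c hc
    rw [add_comm]
    exact h.mul_swap_add_swap hxy (by grind) (by grind)
  have hstar : ρ (swap x y) * ∑ c ∈ T', ρ (swap y c) +
      ρ (swap x y) * ∑ c ∈ T', ρ (swap x c) = #T' • α • ρ (swap x y) := by
    rw [← mul_add, ← sum_add_distrib, mul_sum, sum_congr rfl hpair, sum_const]
  rw [hcard, hT, sum_swapsOn_insert _ hxT', sum_swapsOn_insert _ hyT', sum_insert hyT', mul_add,
    mul_add, mul_add, h.mul_sum_swapsOn_eq_zero hxy (by grind) hyT',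
    h.mul_self _ ⟨x, y, hxy, rfl⟩, zero_add, add_left_comm, hstar]
  push_cast
  module

end IsMatsuoProduct

lemma inv_smul_sum_mul_sub_eq_zero {K A ι : Type*} [Field K] [NonUnitalNonAssocRing A] [Module K A]
    [SMulCommClass K A A] [IsScalarTower K A A] {s : Finset ι} {u : ι → A} {v : A} {α k : K}
    (hk : k ≠ 0) (hv : ∀ i ∈ s, u i * v = α • u i)
    (hu : ∀ i ∈ s, u i * ∑ j ∈ s, u j = k • u i) :
    (k⁻¹ • ∑ i ∈ s, u i) * (v - α • k⁻¹ • ∑ i ∈ s, u i) = 0 := by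
  rw [smul_mul_assoc, sum_mul, sum_eq_zero, smul_zero]
  intro i hi
  rw [mul_sub, hv i hi, mul_smul_comm, mul_smul_comm, hu i hi, smul_smul, smul_smul, mul_assoc,
    inv_mul_cancel₀ hk, mul_one, sub_self]

open scoped Classical in
theorem sum_cz_eigenvector_general
    {A : Type*} [NonUnitalNonAssocCommRing A]
    [Module ℚ A] [SMulCommClass ℚ A A] [IsScalarTower ℚ A A]
    (n m : ℕ)
    (α : ℚ) (ρ : Equiv.Perm (Fin n) → A)
    (hmul_self : ∀ d : Perm (Fin n), d.IsSwap → ρ d * ρ d = ρ d)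
    (hmul_comm : ∀ c d : Perm (Fin n), c.IsSwap → d.IsSwap → c ≠ d → Commute c d →
      ρ c * ρ d = 0)
    (hmul_ncomm : ∀ c d : Perm (Fin n), c.IsSwap → d.IsSwap → ¬ Commute c d →
      ρ c * ρ d = (α/2) • (ρ c + ρ d - ρ (d⁻¹ * c * d)))
    (hden : 1 + α * ((m : ℚ) - 2) ≠ 0)
    (E : Finset (Perm (Fin n)))
    (hE : E = univ.filter fun g : Perm (Fin n) =>
      g.IsSwap ∧ ∀ x : Fin n, m ≤ (x : ℕ) → g x = x)
    (S : Finset (Fin n)) (hS : S = univ.filter fun c : Fin n => (c : ℕ) < m)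
    (z : Fin n) (hz : m ≤ (z : ℕ))
    (a b : Fin n) (ha : (a : ℕ) < m) (hb : (b : ℕ) < m) (hab : a ≠ b) :
    ρ (Equiv.swap a b) * (∑ c ∈ S, ρ (Equiv.swap c z)) = α • ρ (Equiv.swap a b) ∧
    ((1 + α * ((m : ℚ) - 2))⁻¹ • ∑ e ∈ E, ρ e) *
        ((∑ c ∈ S, ρ (Equiv.swap c z))
          - α • ((1 + α * ((m : ℚ) - 2))⁻¹ • ∑ e ∈ E, ρ e)) = 0 := by
  have hρ : IsMatsuoProduct α ρ := ⟨hmul_self, hmul_comm, hmul_ncomm⟩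
  have hmemS : ∀ {c : Fin n}, c ∈ S ↔ (c : ℕ) < m := by simp [hS]
  have hzS : z ∉ S := by simpa [hmemS] using hz
  have hES : E = swapsOn S := by
    ext g
    simp [hE, swapsOn, hmemS]
  have hcard : #S = m := by
    rw [hS, Fin.card_filter_val_lt]
    omega
  subst hES
  refine ⟨hρ.mul_sum_swap_of_notMem hab (hmemS.mpr ha) (hmemS.mpr hb) hzS,
    inv_smul_sum_mul_sub_eq_zero hden ?_ ?_⟩ <;>
    intro e he <;> obtain ⟨x, hx, y, hy, hxy, rfl⟩ := mem_swapsOn.mp he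
  · exact hρ.mul_sum_swap_of_notMem hxy hx hy hzS
  · rw [hρ.mul_sum_swapsOn hxy hx hy, hcard]

open scoped Classical in
/-- in `A^α_3(Sym(n))`, with `E` the transpositions of the embedded `Sym(m)`
(supported on `S = {0,…,m-1}`) and `z` a point with `m ≤ z`, for any transposition
`(a b) ∈ E` one has `(a b)^ρ · Σ_{c ∈ S} (c z)^ρ = α (a b)^ρ`; consequently
`Σ_{c ∈ S} (c z)^ρ - α id_E` is a 0-eigenvector of `id_E`. -/
theorem sum_cz_eigenvector
    {A : Type*} [NonUnitalNonAssocCommRing A]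
    [Module ℚ A] [SMulCommClass ℚ A A] [IsScalarTower ℚ A A]
    (n m : ℕ) (hmn : m ≤ n)
    (α : ℚ) (hα0 : α ≠ 0) (hα1 : α ≠ 1) (ρ : Equiv.Perm (Fin n) → A)
    (hmul_self : ∀ d : Perm (Fin n), d.IsSwap → ρ d * ρ d = ρ d)
    (hmul_comm : ∀ c d : Perm (Fin n), c.IsSwap → d.IsSwap → c ≠ d → Commute c d →
      ρ c * ρ d = 0)
    (hmul_ncomm : ∀ c d : Perm (Fin n), c.IsSwap → d.IsSwap → ¬ Commute c d →
      ρ c * ρ d = (α/2) • (ρ c + ρ d - ρ (d⁻¹ * c * d)))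
    (hden : 1 + α * ((m : ℚ) - 2) ≠ 0)
    (E : Finset (Perm (Fin n)))
    (hE : E = univ.filter fun g : Perm (Fin n) =>
      g.IsSwap ∧ ∀ x : Fin n, m ≤ (x : ℕ) → g x = x)
    (S : Finset (Fin n)) (hS : S = univ.filter fun c : Fin n => (c : ℕ) < m)
    (z : Fin n) (hz : m ≤ (z : ℕ))
    (a b : Fin n) (ha : (a : ℕ) < m) (hb : (b : ℕ) < m) (hab : a ≠ b) :
    ρ (Equiv.swap a b) * (∑ c ∈ S, ρ (Equiv.swap c z)) = α • ρ (Equiv.swap a b) ∧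
    ((1 + α * ((m : ℚ) - 2))⁻¹ • ∑ e ∈ E, ρ e) *
        ((∑ c ∈ S, ρ (Equiv.swap c z))
          - α • ((1 + α * ((m : ℚ) - 2))⁻¹ • ∑ e ∈ E, ρ e)) = 0 :=
  sum_cz_eigenvector_general n m α ρ hmul_self hmul_comm hmul_ncomm hden E hE S hS z hz a b ha hb
    hab
end

section
/- The eigenvalues of ad(id_E) on A^α_3(Sym(n)), where id_E is the identity of the subalgebra spanned by the transpositions of an embedded Sym(m) (3 ≤ m < n), are exactly {1, 0, η(m)} with η(m) = αm/(2+2α(m-2)), the eigenspaces having dimensions m(m-1)/2, (n-m)(n-m+1)/2, and (m-1)(n-m) respectively, and these dimensions sum to n(n-1)/2 = dim A. -/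
/-!
Write `x i j` for the image of the transposition `(i j)` and `F` for the set of points moved by
`Sym(m)`. Peeling a point `a` off `F` splits the transpositions of `Sym(F)` into the star
`{(a c)}` and the transpositions of `Sym(F ∖ {a})`; with the three product rules this gives
`id_E * x a b = x a b` for `a, b ∈ F`, `0` for `a, b ∉ F`, and `κ (u a + m x a b - s b)` for
`a ∈ F`, `b ∉ F`, where `u a = ∑_{c ∈ F ∖ a} x a c`, `s b = ∑_{c ∈ F} x c b` and `κ m = η`.
So the transpositions inside `F` are `1`-eigenvectors, those outside `F` and the `s b - α id_E`
are `0`-eigenvectors, and for a fixed `a₀ ∈ F` the vectors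
`(η - 1) (x a b - x a₀ b) + κ (u a - u a₀)` with `a ≠ a₀` are `η`-eigenvectors. They span `A`
(`m x a₀ b` is `s b` minus the differences `x a b - x a₀ b`) and there are `C(n, 2) = dim A` of
them, so they form an eigenbasis, from which the eigenvalues and their multiplicities are read off.
-/

open Finset Equiv Module

namespace Module.Basis

variable {ι K V : Type*} [Field K] [AddCommGroup V] [Module K V] (b : Basis ι K V)
  {f : End K V} {μ : ι → K}

theorem repr_apply_of_apply_eq_smul (hf : ∀ i, f (b i) = μ i • b i) (v : V) (i : ι) :
    b.repr (f v) i = μ i * b.repr v i := by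
  have hcoord : (b.coord i).comp f = μ i • b.coord i := b.ext fun j => by
    rcases eq_or_ne j i with rfl | hji
    · simp [hf]
    · simp [hf, hji]
  exact LinearMap.congr_fun hcoord v

theorem eigenspace_eq_span_image (hf : ∀ i, f (b i) = μ i • b i) (ν : K) :
    f.eigenspace ν = Submodule.span K (b '' {i | μ i = ν}) := by
  refine le_antisymm (fun v hv => b.mem_span_image.2 fun i hi => ?_) (Submodule.span_le.2 ?_)
  · have hi' := congrArg (fun w => b.repr w i) (End.mem_eigenspace_iff.1 hv)
    simp only [b.repr_apply_of_apply_eq_smul hf, map_smul, Finsupp.smul_apply, smul_eq_mul] at hi'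
    exact mul_right_cancel₀ (Finsupp.mem_support_iff.1 hi) hi'
  · rintro _ ⟨i, hi, rfl⟩
    exact End.mem_eigenspace_iff.2 (hi ▸ hf i)

theorem finrank_eigenspace [Fintype ι] [DecidableEq K] (hf : ∀ i, f (b i) = μ i • b i) (ν : K) :
    finrank K (f.eigenspace ν) = #{i | μ i = ν} := by
  rw [b.eigenspace_eq_span_image hf, Set.image_eq_range]
  exact (finrank_span_eq_card (b.linearIndependent.comp _ Subtype.val_injective)).trans
    (Fintype.card_subtype _)

end Module.Basis

lemma Nat.choose_two_add_succ_choose_two_add_mul {m : ℕ} (hm : 1 ≤ m) (k : ℕ) :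
    m.choose 2 + (k + 1).choose 2 + (m - 1) * k = (m + k).choose 2 := by
  apply Nat.cast_injective (R := ℚ)
  push_cast [Nat.cast_choose_two, Nat.cast_sub hm]
  ring

section Transpositions

variable {ι : Type*} [Fintype ι] [DecidableEq ι] {F : Finset ι} {a i j : ι} {g : Perm ι}

def swapsIn (F : Finset ι) : Finset (Perm ι) :=
  F.offDiag.image fun p => swap p.1 p.2

lemma mem_swapsIn : g ∈ swapsIn F ↔ ∃ i ∈ F, ∃ j ∈ F, i ≠ j ∧ swap i j = g := by
  simp [swapsIn, and_assoc]

lemma swap_mem_swapsIn (hi : i ∈ F) (hj : j ∈ F) (hij : i ≠ j) : swap i j ∈ swapsIn F :=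
  mem_swapsIn.2 ⟨i, hi, j, hj, hij, rfl⟩

lemma swap_apply_of_mem_swapsIn (hg : g ∈ swapsIn F) (ha : a ∉ F) : g a = a := by
  obtain ⟨i, hi, j, hj, -, rfl⟩ := mem_swapsIn.1 hg
  exact swap_apply_of_ne_of_ne (ne_of_mem_of_not_mem hi ha).symm (ne_of_mem_of_not_mem hj ha).symm

lemma mem_swapsIn_iff_isSwap : g ∈ swapsIn F ↔ g.IsSwap ∧ ∀ x ∉ F, g x = x := by
  constructor
  · intro hg
    obtain ⟨i, -, j, -, hij, rfl⟩ := mem_swapsIn.1 hg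
    exact ⟨⟨i, j, hij, rfl⟩, fun x hx => swap_apply_of_mem_swapsIn hg hx⟩
  · rintro ⟨⟨i, j, hij, rfl⟩, hfix⟩
    refine swap_mem_swapsIn (by_contra fun hi => hij ?_) (by_contra fun hj => hij ?_) hij
    · simpa using (hfix i hi).symm
    · simpa using hfix j hj

lemma swapsIn_insert (ha : a ∉ F) :
    swapsIn (insert a F) = F.image (swap a) ∪ swapsIn F := by
  ext g
  simp only [mem_union, mem_image, mem_swapsIn, mem_insert]
  constructor
  · rintro ⟨i, rfl | hi, j, rfl | hj, hij, rfl⟩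
    · exact absurd rfl hij
    · exact .inl ⟨j, hj, rfl⟩
    · exact .inl ⟨i, hi, swap_comm _ _⟩
    · exact .inr ⟨i, hi, j, hj, hij, rfl⟩
  · rintro (⟨c, hc, rfl⟩ | ⟨i, hi, j, hj, hij, rfl⟩)
    · exact ⟨a, .inl rfl, c, .inr hc, ne_of_mem_of_not_mem hc ha |>.symm, rfl⟩
    · exact ⟨i, .inr hi, j, .inr hj, hij, rfl⟩

lemma disjoint_image_swap_swapsIn (ha : a ∉ F) : Disjoint (F.image (swap a)) (swapsIn F) := by
  refine disjoint_left.2 fun g hg hgF => ?_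
  obtain ⟨c, hc, rfl⟩ := mem_image.1 hg
  have := swap_apply_of_mem_swapsIn hgF ha
  rw [swap_apply_left] at this
  exact ha (this ▸ hc)

lemma sum_swapsIn_insert {M : Type*} [AddCommMonoid M] (f : Perm ι → M) (ha : a ∉ F) :
    ∑ e ∈ swapsIn (insert a F), f e = ∑ c ∈ F, f (swap a c) + ∑ e ∈ swapsIn F, f e := by
  rw [swapsIn_insert ha, sum_union (disjoint_image_swap_swapsIn ha),
    sum_image fun _ _ _ _ h => swap_injective_of_left a h]

lemma card_swapsIn (F : Finset ι) : #(swapsIn F) = (#F).choose 2 := by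
  induction F using Finset.induction_on with
  | empty => simp [swapsIn]
  | insert a F ha ih =>
    rw [card_eq_sum_ones, sum_swapsIn_insert _ ha, ← card_eq_sum_ones, ← card_eq_sum_ones, ih,
      card_insert_of_notMem ha, Nat.choose_succ_succ', Nat.choose_one_right]

lemma finrank_eq_choose_two_of_linearIndependent {K M : Type*} [Field K] [AddCommGroup M]
    [Module K M] {ρ : Perm ι → M}
    (hspan : Submodule.span K (ρ '' {g : Perm ι | g.IsSwap}) = ⊤)
    (hindep : LinearIndependent K (fun d : {g : Perm ι // g.IsSwap} => ρ d.1)) :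
    finrank K M = (Fintype.card ι).choose 2 := by
  classical
  have hswaps : ({g | g.IsSwap} : Finset (Perm ι)) = swapsIn univ := by
    ext g
    simp [mem_swapsIn_iff_isSwap]
  rw [← finrank_top, ← hspan, Set.image_eq_range]
  refine (finrank_span_eq_card hindep).trans ?_
  rw [Fintype.card_subtype, hswaps, card_swapsIn, card_univ]

end Transpositions

section MatsuoAlgebra

variable {ι K A : Type*} [DecidableEq ι] [Field K] [NonUnitalNonAssocCommRing A] [Module K A]

structure IsMatsuoProduct_s7 (α : K) (ρ : Perm ι → A) : Prop where
  mul_self : ∀ d : Perm ι, d.IsSwap → ρ d * ρ d = ρ d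
  mul_eq_zero_of_commute : ∀ c d : Perm ι, c.IsSwap → d.IsSwap → c ≠ d → Commute c d →
    ρ c * ρ d = 0
  mul_of_not_commute : ∀ c d : Perm ι, c.IsSwap → d.IsSwap → ¬ Commute c d →
    ρ c * ρ d = (α / 2) • (ρ c + ρ d - ρ (d⁻¹ * c * d))

variable {α : K} {ρ : Perm ι → A} {F : Finset ι} {a b a₀ i j k l : ι}

namespace IsMatsuoProduct_s7

lemma swap_mul_self (h : IsMatsuoProduct_s7 α ρ) (hij : i ≠ j) :
    ρ (swap i j) * ρ (swap i j) = ρ (swap i j) :=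
  h.mul_self _ ⟨i, j, hij, rfl⟩

lemma swap_mul_swap_of_disjoint (h : IsMatsuoProduct_s7 α ρ) (hij : i ≠ j) (hkl : k ≠ l)
    (hik : i ≠ k) (hil : i ≠ l) (hjk : j ≠ k) (hjl : j ≠ l) : ρ (swap i j) * ρ (swap k l) = 0 := by
  refine h.mul_eq_zero_of_commute _ _ ⟨i, j, hij, rfl⟩ ⟨k, l, hkl, rfl⟩ (fun he => hij ?_)
    (Perm.disjoint_swap_swap (by simp [*])).commute
  simpa [swap_apply_of_ne_of_ne hik hil] using (congrArg (· i) he).symm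

lemma swap_mul_swap_of_ne (h : IsMatsuoProduct_s7 α ρ) (hij : i ≠ j) (hik : i ≠ k) (hjk : j ≠ k) :
    ρ (swap i j) * ρ (swap i k) = (α / 2) • (ρ (swap i j) + ρ (swap i k) - ρ (swap j k)) := by
  have hnc : ¬ Commute (swap i j) (swap i k) := fun hc => hik <| by
    simpa [Perm.mul_apply, swap_apply_of_ne_of_ne hij.symm hjk] using congrArg (· j) hc.eq
  have hconj : (swap i k)⁻¹ * swap i j * swap i k = swap j k := by
    simpa [swap_apply_of_ne_of_ne hij.symm hjk, swap_comm k j] using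
      (swap_apply_apply (swap i k) i j).symm
  rw [h.mul_of_not_commute _ _ ⟨i, j, hij, rfl⟩ ⟨i, k, hik, rfl⟩ hnc, hconj]

end IsMatsuoProduct_s7

def starSum (ρ : Perm ι → A) (a : ι) (F : Finset ι) : A := ∑ c ∈ F, ρ (swap a c)

lemma starSum_insert (ha : a ∉ F) : starSum ρ b (insert a F) = ρ (swap b a) + starSum ρ b F :=
  sum_insert ha

lemma swap_mem_of_starSum_mem {V : Submodule K A} (hF : (#F : K) ≠ 0) (hs : starSum ρ b F ∈ V)
    (hdiff : ∀ a ∈ F, ρ (swap a b) - ρ (swap a₀ b) ∈ V) (ha : a ∈ F) : ρ (swap a b) ∈ V := by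
  have hcount : (#F : K) • ρ (swap a₀ b)
      = starSum ρ b F - ∑ c ∈ F, (ρ (swap c b) - ρ (swap a₀ b)) := by
    rw [sum_sub_distrib, sum_const, starSum]
    simp only [swap_comm b]
    module
  have h₀ := V.smul_mem (#F : K)⁻¹ (hcount ▸ V.sub_mem hs (V.sum_mem hdiff))
  rw [inv_smul_smul₀ hF] at h₀
  simpa using V.add_mem (hdiff a ha) h₀

lemma IsMatsuoProduct_s7.starSum_mul_swap (h : IsMatsuoProduct_s7 α ρ) (ha : a ∉ F) (hb : b ∉ F)
    (hab : a ≠ b) :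
    starSum ρ a F * ρ (swap a b)
      = (α / 2) • (starSum ρ a F + (#F : K) • ρ (swap a b) - starSum ρ b F) := by
  calc starSum ρ a F * ρ (swap a b)
      = ∑ c ∈ F, (α / 2) • (ρ (swap a c) + ρ (swap a b) - ρ (swap b c)) := by
        rw [starSum, sum_mul]
        refine sum_congr rfl fun c hc => ?_
        rw [h.swap_mul_swap_of_ne (ne_of_mem_of_not_mem hc ha).symm hab
          (ne_of_mem_of_not_mem hc hb), swap_comm c b]
    _ = _ := by
        rw [← smul_sum, sum_sub_distrib, sum_add_distrib, sum_const, ← Nat.cast_smul_eq_nsmul K]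
        rfl

variable [Fintype ι]

def swapSum (ρ : Perm ι → A) (F : Finset ι) : A := ∑ e ∈ swapsIn F, ρ e

lemma swapSum_insert (ha : a ∉ F) : swapSum ρ (insert a F) = starSum ρ a F + swapSum ρ F :=
  sum_swapsIn_insert ρ ha

lemma sum_starSum_erase (F : Finset ι) : ∑ a ∈ F, starSum ρ a (F.erase a) = 2 • swapSum ρ F := by
  induction F using Finset.induction_on with
  | empty => simp [swapSum, swapsIn]
  | insert a F ha ih =>
    have hstar : ∀ c ∈ F, starSum ρ c ((insert a F).erase c)
        = ρ (swap a c) + starSum ρ c (F.erase c) := fun c hc => by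
      rw [erase_insert_of_ne (ne_of_mem_of_not_mem hc ha).symm,
        starSum_insert (fun h => ha (mem_of_mem_erase h)), swap_comm]
    rw [sum_insert ha, erase_insert ha, sum_congr rfl hstar, sum_add_distrib, ih,
      swapSum_insert ha, starSum]
    abel

namespace IsMatsuoProduct_s7

lemma swapSum_mul_swap_of_notMem (h : IsMatsuoProduct_s7 α ρ) (ha : a ∉ F) (hb : b ∉ F)
    (hab : a ≠ b) : swapSum ρ F * ρ (swap a b) = 0 := by
  refine sum_mul (swapsIn F) ρ _ ▸ sum_eq_zero fun e he => ?_
  obtain ⟨i, hi, j, hj, hij, rfl⟩ := mem_swapsIn.1 he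
  exact h.swap_mul_swap_of_disjoint hij hab (ne_of_mem_of_not_mem hi ha)
    (ne_of_mem_of_not_mem hi hb) (ne_of_mem_of_not_mem hj ha) (ne_of_mem_of_not_mem hj hb)

lemma swapSum_insert_mul_swap (h : IsMatsuoProduct_s7 α ρ) (ha : a ∉ F) (hb : b ∉ F) (hab : a ≠ b) :
    swapSum ρ (insert a F) * ρ (swap a b)
      = (α / 2) • (starSum ρ a F + (#F : K) • ρ (swap a b) - starSum ρ b F) := by
  rw [swapSum_insert ha, add_mul, h.starSum_mul_swap ha hb hab,
    h.swapSum_mul_swap_of_notMem ha hb hab, add_zero]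

lemma swapSum_insert_insert_mul_swap [NeZero (2 : K)] (h : IsMatsuoProduct_s7 α ρ) (ha : a ∉ F)
    (hb : b ∉ F) (hab : a ≠ b) :
    swapSum ρ (insert a (insert b F)) * ρ (swap a b) = (1 + α * #F) • ρ (swap a b) := by
  have ha' : a ∉ insert b F := by simp [hab, ha]
  rw [swapSum_insert ha', starSum_insert hb, add_mul, add_mul, h.swap_mul_self hab,
    h.starSum_mul_swap ha hb hab, swap_comm a b, h.swapSum_insert_mul_swap hb ha hab.symm]
  match_scalars <;> field_simp <;> ring

lemma swapSum_mul_swap_of_mem [NeZero (2 : K)] (h : IsMatsuoProduct_s7 α ρ) (ha : a ∈ F)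
    (hb : b ∈ F) (hab : a ≠ b) :
    swapSum ρ F * ρ (swap a b) = (1 + α * ((#F : K) - 2)) • ρ (swap a b) := by
  set F' := (F.erase a).erase b
  have ha' : a ∉ F' := fun h => notMem_erase a F (mem_of_mem_erase h)
  have hb' : b ∉ F' := notMem_erase b _
  have hF : insert a (insert b F') = F := by
    rw [insert_erase (mem_erase.2 ⟨hab.symm, hb⟩), insert_erase ha]
  have hcard : (#F : K) - 2 = #F' := by
    rw [← hF, card_insert_of_notMem (by simp [hab, ha']), card_insert_of_notMem hb']
    push_cast
    ring
  rw [hcard, ← h.swapSum_insert_insert_mul_swap ha' hb' hab, hF]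

lemma swapSum_mul_swap_of_mem_of_notMem (h : IsMatsuoProduct_s7 α ρ) (ha : a ∈ F) (hb : b ∉ F) :
    swapSum ρ F * ρ (swap a b)
      = (α / 2) • (starSum ρ a (F.erase a) + (#F : K) • ρ (swap a b) - starSum ρ b F) := by
  have hab : a ≠ b := ne_of_mem_of_not_mem ha hb
  have hb' : b ∉ F.erase a := fun h => hb (mem_of_mem_erase h)
  rw [← insert_erase ha, h.swapSum_insert_mul_swap (notMem_erase a F) hb' hab,
    starSum_insert (notMem_erase a F), card_insert_of_notMem (notMem_erase a F),
    erase_insert_eq_erase, erase_idem, swap_comm b a]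
  push_cast
  module

end IsMatsuoProduct_s7

def idOf (α : K) (ρ : Perm ι → A) (F : Finset ι) : A := (1 + α * ((#F : K) - 2))⁻¹ • swapSum ρ F

/-- The coefficient `κ`, with `η(m) = κ m`. -/
def mixCoeff (α : K) (m : ℕ) : K := (1 + α * ((m : K) - 2))⁻¹ * (α / 2)

abbrev MatsuoEigenIndex (F : Finset ι) (a₀ : ι) : Type _ :=
  swapsIn F ⊕ (swapsIn Fᶜ ⊕ ↥(Fᶜ : Finset ι)) ⊕ (F.erase a₀ × ↥(Fᶜ : Finset ι))

/-- `id_E` fixes `u a - u a₀` and sends `x a b - x a₀ b` to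
`η (x a b - x a₀ b) + κ (u a - u a₀)`, which dictates the last family. -/
def matsuoEigenvector (α : K) (ρ : Perm ι → A) (F : Finset ι) (a₀ : ι) :
    MatsuoEigenIndex F a₀ → A :=
  Sum.elim (fun e => ρ e) <|
    Sum.elim (Sum.elim (fun e => ρ e) fun b => starSum ρ b F - α • idOf α ρ F) fun p =>
      (mixCoeff α #F * #F - 1) • (ρ (swap p.1 p.2) - ρ (swap a₀ p.2)) +
        mixCoeff α #F • (starSum ρ p.1 (F.erase p.1) - starSum ρ a₀ (F.erase a₀))

def matsuoEigenvalue (α : K) (F : Finset ι) (a₀ : ι) : MatsuoEigenIndex F a₀ → K :=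
  Sum.elim (fun _ => 1) <| Sum.elim (fun _ => 0) fun _ => mixCoeff α #F * #F

lemma card_matsuoEigenIndex (ha₀ : a₀ ∈ F) :
    Fintype.card (MatsuoEigenIndex F a₀) = (Fintype.card ι).choose 2 := by
  have hsum := Nat.choose_two_add_succ_choose_two_add_mul (card_pos.2 ⟨a₀, ha₀⟩)
    (Fintype.card ι - #F)
  rw [Nat.add_sub_cancel' (card_le_univ F), Nat.choose_succ_succ', Nat.choose_one_right] at hsum
  simp only [Fintype.card_sum, Fintype.card_prod, Fintype.card_coe, card_swapsIn, card_compl,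
    card_erase_of_mem ha₀]
  linarith

lemma card_filter_matsuoEigenvalue [DecidableEq K] (ν : K) :
    #{i | matsuoEigenvalue α F a₀ i = ν}
      = (if 1 = ν then Fintype.card (swapsIn F) else 0)
        + (if 0 = ν then Fintype.card (swapsIn Fᶜ ⊕ ↥(Fᶜ : Finset ι)) else 0)
        + (if mixCoeff α #F * #F = ν then Fintype.card (F.erase a₀ × ↥(Fᶜ : Finset ι)) else 0) := by
  rw [card_filter, Fintype.sum_sum_type, Fintype.sum_sum_type]
  split_ifs <;> simp_all [matsuoEigenvalue, add_assoc]

lemma swap_mem_span_matsuoEigenvector (hη : mixCoeff α #F * #F ≠ 1) (hF : (#F : K) ≠ 0)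
    (ha₀ : a₀ ∈ F) {i j : ι} (hij : i ≠ j) :
    ρ (swap i j) ∈ Submodule.span K (Set.range (matsuoEigenvector α ρ F a₀)) := by
  set V := Submodule.span K (Set.range (matsuoEigenvector α ρ F a₀))
  have hin : ∀ i, matsuoEigenvector α ρ F a₀ i ∈ V := fun i => Submodule.subset_span ⟨i, rfl⟩
  have hF_in : ∀ e ∈ swapsIn F, ρ e ∈ V := fun e he => hin (.inl ⟨e, he⟩)
  have hFc_in : ∀ e ∈ swapsIn Fᶜ, ρ e ∈ V := fun e he => hin (.inr (.inl (.inl ⟨e, he⟩)))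
  have hid_in : idOf α ρ F ∈ V := V.smul_mem _ (V.sum_mem hF_in)
  have hu_in : ∀ a ∈ F, starSum ρ a (F.erase a) ∈ V := fun a ha => V.sum_mem fun c hc =>
    hF_in _ (swap_mem_swapsIn ha (mem_of_mem_erase hc) (ne_of_mem_erase hc).symm)
  have hs_in : ∀ b ∉ F, starSum ρ b F ∈ V := fun b hb => by
    simpa [matsuoEigenvector] using
      V.add_mem (hin (.inr (.inl (.inr ⟨b, mem_compl.2 hb⟩)))) (V.smul_mem α hid_in)
  have hdiff_in : ∀ a ∈ F, ∀ b ∉ F, ρ (swap a b) - ρ (swap a₀ b) ∈ V := by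
    intro a ha b hb
    rcases eq_or_ne a a₀ with rfl | hne
    · rw [sub_self]
      exact V.zero_mem
    have hv := V.sub_mem (hin (.inr (.inr (⟨a, mem_erase.2 ⟨hne, ha⟩⟩, ⟨b, mem_compl.2 hb⟩))))
      (V.smul_mem (mixCoeff α #F) (V.sub_mem (hu_in a ha) (hu_in a₀ ha₀)))
    simpa [matsuoEigenvector, sub_ne_zero.2 hη] using V.smul_mem (mixCoeff α #F * #F - 1)⁻¹ hv
  have hmix_in : ∀ a ∈ F, ∀ b ∉ F, ρ (swap a b) ∈ V := fun a ha b hb =>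
    swap_mem_of_starSum_mem hF (hs_in b hb) (fun c hc => hdiff_in c hc b hb) ha
  by_cases hi : i ∈ F <;> by_cases hj : j ∈ F
  · exact hF_in _ (swap_mem_swapsIn hi hj hij)
  · exact hmix_in i hi j hj
  · exact swap_comm i j ▸ hmix_in j hj i hi
  · exact hFc_in _ (swap_mem_swapsIn (mem_compl.2 hi) (mem_compl.2 hj) hij)

variable [IsScalarTower K A A]

namespace IsMatsuoProduct_s7

lemma idOf_mul_swap_of_mem [NeZero (2 : K)] (h : IsMatsuoProduct_s7 α ρ)
    (hc : 1 + α * ((#F : K) - 2) ≠ 0) (ha : a ∈ F) (hb : b ∈ F) (hab : a ≠ b) :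
    idOf α ρ F * ρ (swap a b) = ρ (swap a b) := by
  rw [idOf, smul_mul_assoc, h.swapSum_mul_swap_of_mem ha hb hab, inv_smul_smul₀ hc]

lemma idOf_mul_swap_of_notMem (h : IsMatsuoProduct_s7 α ρ) (ha : a ∉ F) (hb : b ∉ F) (hab : a ≠ b) :
    idOf α ρ F * ρ (swap a b) = 0 := by
  rw [idOf, smul_mul_assoc, h.swapSum_mul_swap_of_notMem ha hb hab, smul_zero]

lemma idOf_mul_swap_of_mem_of_notMem (h : IsMatsuoProduct_s7 α ρ) (ha : a ∈ F) (hb : b ∉ F) :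
    idOf α ρ F * ρ (swap a b) = mixCoeff α #F •
      (starSum ρ a (F.erase a) + (#F : K) • ρ (swap a b) - starSum ρ b F) := by
  rw [idOf, smul_mul_assoc, h.swapSum_mul_swap_of_mem_of_notMem ha hb, smul_smul, mixCoeff]

lemma idOf_mul_swapSum [NeZero (2 : K)] (h : IsMatsuoProduct_s7 α ρ)
    (hc : 1 + α * ((#F : K) - 2) ≠ 0) : idOf α ρ F * swapSum ρ F = swapSum ρ F := by
  refine (mul_sum _ _ _).trans (sum_congr rfl fun e he => ?_)
  obtain ⟨i, hi, j, hj, hij, rfl⟩ := mem_swapsIn.1 he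
  exact h.idOf_mul_swap_of_mem hc hi hj hij

lemma idOf_mul_starSum_erase [NeZero (2 : K)] (h : IsMatsuoProduct_s7 α ρ)
    (hc : 1 + α * ((#F : K) - 2) ≠ 0) (ha : a ∈ F) :
    idOf α ρ F * starSum ρ a (F.erase a) = starSum ρ a (F.erase a) := by
  refine (mul_sum _ _ _).trans (sum_congr rfl fun c hc' => ?_)
  obtain ⟨hca, hcF⟩ := mem_erase.1 hc'
  exact h.idOf_mul_swap_of_mem hc ha hcF hca.symm

lemma idOf_mul_starSum [NeZero (2 : K)] (h : IsMatsuoProduct_s7 α ρ) (hb : b ∉ F) :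
    idOf α ρ F * starSum ρ b F = α • idOf α ρ F := by
  calc idOf α ρ F * starSum ρ b F
      = ∑ c ∈ F, mixCoeff α #F •
          (starSum ρ c (F.erase c) + (#F : K) • ρ (swap c b) - starSum ρ b F) := by
        refine (mul_sum _ _ _).trans (sum_congr rfl fun c hc => ?_)
        rw [swap_comm, h.idOf_mul_swap_of_mem_of_notMem hc hb]
    _ = (2 * mixCoeff α #F) • swapSum ρ F := by
        rw [← smul_sum, sum_sub_distrib, sum_add_distrib, sum_starSum_erase, ← smul_sum, sum_const,
          starSum]
        simp only [swap_comm b]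
        module
    _ = α • idOf α ρ F := by
        rw [idOf, smul_smul, mixCoeff, mul_left_comm, mul_div_cancel₀ α two_ne_zero, mul_comm]

variable [SMulCommClass K A A]

lemma idOf_mul_idOf [NeZero (2 : K)] (h : IsMatsuoProduct_s7 α ρ)
    (hc : 1 + α * ((#F : K) - 2) ≠ 0) : idOf α ρ F * idOf α ρ F = idOf α ρ F := by
  nth_rw 2 [idOf]
  rw [mul_smul_comm, h.idOf_mul_swapSum hc]
  rfl

lemma idOf_mul_matsuoEigenvector [NeZero (2 : K)] (h : IsMatsuoProduct_s7 α ρ)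
    (hc : 1 + α * ((#F : K) - 2) ≠ 0) (ha₀ : a₀ ∈ F) (i : MatsuoEigenIndex F a₀) :
    idOf α ρ F * matsuoEigenvector α ρ F a₀ i
      = matsuoEigenvalue α F a₀ i • matsuoEigenvector α ρ F a₀ i := by
  rcases i with ⟨e, he⟩ | (⟨e, he⟩ | ⟨b, hb⟩) | ⟨⟨a, ha⟩, ⟨b, hb⟩⟩
  · obtain ⟨i, hi, j, hj, hij, rfl⟩ := mem_swapsIn.1 he
    simpa [matsuoEigenvector, matsuoEigenvalue] using h.idOf_mul_swap_of_mem hc hi hj hij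
  · obtain ⟨i, hi, j, hj, hij, rfl⟩ := mem_swapsIn.1 he
    simpa [matsuoEigenvector, matsuoEigenvalue] using
      h.idOf_mul_swap_of_notMem (mem_compl.1 hi) (mem_compl.1 hj) hij
  · simp only [matsuoEigenvector, matsuoEigenvalue, Sum.elim_inl, Sum.elim_inr, zero_smul]
    rw [mul_sub, h.idOf_mul_starSum (mem_compl.1 hb), mul_smul_comm, h.idOf_mul_idOf hc, sub_self]
  · obtain ⟨hne, ha⟩ := mem_erase.1 ha
    have hb' := mem_compl.1 hb
    simp only [matsuoEigenvector, matsuoEigenvalue, Sum.elim_inr]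
    rw [mul_add, mul_smul_comm, mul_smul_comm, mul_sub, mul_sub,
      h.idOf_mul_swap_of_mem_of_notMem ha hb', h.idOf_mul_swap_of_mem_of_notMem ha₀ hb',
      h.idOf_mul_starSum_erase hc ha, h.idOf_mul_starSum_erase hc ha₀]
    module

lemma finrank_eigenspace_idOf [CharZero K] [DecidableEq K]
    (h : IsMatsuoProduct_s7 α ρ)
    (hspan : Submodule.span K (ρ '' {g : Perm ι | g.IsSwap}) = ⊤)
    (hindep : LinearIndependent K (fun d : {g : Perm ι // g.IsSwap} => ρ d.1))
    (hc : 1 + α * ((#F : K) - 2) ≠ 0) (hη : mixCoeff α #F * #F ≠ 1) (hF : F.Nonempty) (ν : K) :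
    finrank K (End.eigenspace (LinearMap.mulLeft K (idOf α ρ F)) ν)
      = (if 1 = ν then (#F).choose 2 else 0)
        + (if 0 = ν then (Fintype.card ι - #F + 1).choose 2 else 0)
        + (if mixCoeff α #F * #F = ν then (#F - 1) * (Fintype.card ι - #F) else 0) := by
  obtain ⟨a₀, ha₀⟩ := hF
  have hspan' : ⊤ ≤ Submodule.span K (Set.range (matsuoEigenvector α ρ F a₀)) := by
    rw [← hspan, Submodule.span_le]
    rintro _ ⟨_, ⟨i, j, hij, rfl⟩, rfl⟩
    exact swap_mem_span_matsuoEigenvector hη (Nat.cast_ne_zero.2 (card_ne_zero.2 ⟨a₀, ha₀⟩)) ha₀ hij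
  let B := basisOfTopLeSpanOfCardEqFinrank _ hspan' <| (card_matsuoEigenIndex ha₀).trans
    (finrank_eq_choose_two_of_linearIndependent hspan hindep).symm
  rw [B.finrank_eigenspace (μ := matsuoEigenvalue α F a₀) fun i => by
      simpa [B] using h.idOf_mul_matsuoEigenvector hc ha₀ i,
    card_filter_matsuoEigenvalue, Fintype.card_sum, Fintype.card_prod, Fintype.card_coe,
    Fintype.card_coe, Fintype.card_coe, Fintype.card_coe, card_swapsIn, card_swapsIn, card_compl,
    card_erase_of_mem ha₀, Nat.choose_succ_succ' (Fintype.card ι - #F), Nat.choose_one_right,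
    add_comm ((Fintype.card ι - #F).choose 2)]

lemma eigenspace_idOf_ne_bot_iff [CharZero K] (h : IsMatsuoProduct_s7 α ρ)
    (hspan : Submodule.span K (ρ '' {g : Perm ι | g.IsSwap}) = ⊤)
    (hindep : LinearIndependent K (fun d : {g : Perm ι // g.IsSwap} => ρ d.1))
    (hc : 1 + α * ((#F : K) - 2) ≠ 0) (hη0 : mixCoeff α #F * #F ≠ 0)
    (hη1 : mixCoeff α #F * #F ≠ 1) (hF : 2 ≤ #F) (hFc : #F < Fintype.card ι) (ν : K) :
    End.eigenspace (LinearMap.mulLeft K (idOf α ρ F)) ν ≠ ⊥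
      ↔ ν ∈ ({1, 0, mixCoeff α #F * #F} : Set K) := by
  classical
  have hfin := finrank_eq_choose_two_of_linearIndependent hspan hindep
  have : Module.Finite K A := Module.finite_of_finrank_pos (hfin ▸ Nat.choose_pos (by omega))
  have h1 : 0 < (#F).choose 2 := Nat.choose_pos hF
  have h0 : 0 < (Fintype.card ι - #F + 1).choose 2 := Nat.choose_pos (by omega)
  have hη : 0 < (#F - 1) * (Fintype.card ι - #F) := Nat.mul_pos (by omega) (by omega)
  rw [Ne, Submodule.finrank_eq_zero.symm.not,
    h.finrank_eigenspace_idOf hspan hindep hc hη1 (card_pos.1 (by omega))]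
  simp only [Set.mem_insert_iff, Set.mem_singleton_iff]
  split_ifs <;> grind

end IsMatsuoProduct_s7

end MatsuoAlgebra

open scoped Classical in
theorem idE_eigenvalues_and_dimensions_general
    {A : Type*} [NonUnitalNonAssocCommRing A]
    [Module ℚ A] [SMulCommClass ℚ A A] [IsScalarTower ℚ A A]
    (n m : ℕ) (hm3 : 3 ≤ m) (hmn : m < n)
    (α : ℚ) (ρ : Equiv.Perm (Fin n) → A)
    (hmul_self : ∀ d : Perm (Fin n), d.IsSwap → ρ d * ρ d = ρ d)
    (hmul_comm : ∀ c d : Perm (Fin n), c.IsSwap → d.IsSwap → c ≠ d → Commute c d →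
      ρ c * ρ d = 0)
    (hmul_ncomm : ∀ c d : Perm (Fin n), c.IsSwap → d.IsSwap → ¬ Commute c d →
      ρ c * ρ d = (α/2) • (ρ c + ρ d - ρ (d⁻¹ * c * d)))
    (hspan : Submodule.span ℚ (ρ '' {g : Perm (Fin n) | g.IsSwap}) = ⊤)
    (hindep : LinearIndependent ℚ (fun d : {g : Perm (Fin n) // g.IsSwap} => ρ d.1))
    (hden : 1 + α * ((m : ℚ) - 2) ≠ 0)
    (η : ℚ) (hη : η = α * m / (2 + 2 * α * ((m : ℚ) - 2)))
    (hη0 : η ≠ 0) (hη1 : η ≠ 1)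
    (E : Finset (Perm (Fin n)))
    (hE : E = univ.filter fun g : Perm (Fin n) =>
      g.IsSwap ∧ ∀ x : Fin n, m ≤ (x : ℕ) → g x = x)
    (idE : A) (hidE : idE = (1 + α * ((m : ℚ) - 2))⁻¹ • ∑ e ∈ E, ρ e) :
    (∀ μ : ℚ,
        Module.End.eigenspace (LinearMap.mulLeft ℚ idE) μ ≠ ⊥ ↔ μ ∈ ({1, 0, η} : Set ℚ)) ∧
    Module.finrank ℚ (Module.End.eigenspace (LinearMap.mulLeft ℚ idE) 1)
        = m * (m - 1) / 2 ∧
    Module.finrank ℚ (Module.End.eigenspace (LinearMap.mulLeft ℚ idE) 0)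
        = (n - m) * (n - m + 1) / 2 ∧
    Module.finrank ℚ (Module.End.eigenspace (LinearMap.mulLeft ℚ idE) η)
        = (m - 1) * (n - m) ∧
    m * (m - 1) / 2 + (n - m) * (n - m + 1) / 2 + (m - 1) * (n - m) = n * (n - 1) / 2 ∧
    Module.finrank ℚ A = n * (n - 1) / 2 := by
  set F : Finset (Fin n) := {x | (x : ℕ) < m}
  have hFcard : #F = m := by rw [Fin.card_filter_val_lt, min_eq_right hmn.le]
  have hid : idE = idOf α ρ F := by
    rw [hidE, idOf, swapSum, hFcard, hE]
    congr 2
    ext g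
    simp [mem_swapsIn_iff_isSwap, F]
  have hη' : η = mixCoeff α #F * #F := by
    rw [hη, mixCoeff, hFcard]
    field_simp
  have hρ : IsMatsuoProduct_s7 α ρ := ⟨hmul_self, hmul_comm, hmul_ncomm⟩
  have hdim := hρ.finrank_eigenspace_idOf hspan hindep (hFcard ▸ hden) (hη' ▸ hη1)
    (card_pos.1 (by omega))
  rw [← hid, ← hη', hFcard, Fintype.card_fin] at hdim
  have hsum := Nat.choose_two_add_succ_choose_two_add_mul (by omega : 1 ≤ m) (n - m)
  rw [Nat.add_sub_cancel' hmn.le] at hsum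
  refine ⟨fun ν => ?_, ?_, ?_, ?_, ?_, ?_⟩
  · rw [hid, hη']
    exact hρ.eigenspace_idOf_ne_bot_iff hspan hindep (hFcard ▸ hden) (hη' ▸ hη0) (hη' ▸ hη1)
      (by omega) (by simpa [hFcard]) ν
  · simp [hdim, hη1, Nat.choose_two_right]
  · simp [hdim, hη0, Nat.choose_two_right, mul_comm]
  · simp [hdim, hη0.symm, hη1.symm]
  · simpa [Nat.choose_two_right, mul_comm] using hsum
  · simpa [Nat.choose_two_right] using finrank_eq_choose_two_of_linearIndependent hspan hindep

open scoped Classical in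
/-- the eigenvalues of `ad(id_E)` on the Matsuo algebra `A^α_3(Sym(n))`,
for `E` the transpositions of an embedded `Sym(m)` with `3 ≤ m < n`, are exactly
`{1, 0, η(m)}` with `η(m) = αm/(2+2α(m-2))`, with eigenspaces of dimensions
`m(m-1)/2`, `(n-m)(n-m+1)/2` and `(m-1)(n-m)`, summing to `n(n-1)/2 = dim A`. -/
theorem idE_eigenvalues_and_dimensions
    {A : Type*} [NonUnitalNonAssocCommRing A]
    [Module ℚ A] [SMulCommClass ℚ A A] [IsScalarTower ℚ A A]
    (n m : ℕ) (hm3 : 3 ≤ m) (hmn : m < n)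
    (α : ℚ) (hα0 : α ≠ 0) (hα1 : α ≠ 1) (ρ : Equiv.Perm (Fin n) → A)
    (hmul_self : ∀ d : Perm (Fin n), d.IsSwap → ρ d * ρ d = ρ d)
    (hmul_comm : ∀ c d : Perm (Fin n), c.IsSwap → d.IsSwap → c ≠ d → Commute c d →
      ρ c * ρ d = 0)
    (hmul_ncomm : ∀ c d : Perm (Fin n), c.IsSwap → d.IsSwap → ¬ Commute c d →
      ρ c * ρ d = (α/2) • (ρ c + ρ d - ρ (d⁻¹ * c * d)))
    (hspan : Submodule.span ℚ (ρ '' {g : Perm (Fin n) | g.IsSwap}) = ⊤)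
    (hindep : LinearIndependent ℚ (fun d : {g : Perm (Fin n) // g.IsSwap} => ρ d.1))
    (hden : 1 + α * ((m : ℚ) - 2) ≠ 0)
    (η : ℚ) (hη : η = α * m / (2 + 2 * α * ((m : ℚ) - 2)))
    (hη0 : η ≠ 0) (hη1 : η ≠ 1)
    (E : Finset (Perm (Fin n)))
    (hE : E = univ.filter fun g : Perm (Fin n) =>
      g.IsSwap ∧ ∀ x : Fin n, m ≤ (x : ℕ) → g x = x)
    (idE : A) (hidE : idE = (1 + α * ((m : ℚ) - 2))⁻¹ • ∑ e ∈ E, ρ e) :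
    (∀ μ : ℚ,
        Module.End.eigenspace (LinearMap.mulLeft ℚ idE) μ ≠ ⊥ ↔ μ ∈ ({1, 0, η} : Set ℚ)) ∧
    Module.finrank ℚ (Module.End.eigenspace (LinearMap.mulLeft ℚ idE) 1)
        = m * (m - 1) / 2 ∧
    Module.finrank ℚ (Module.End.eigenspace (LinearMap.mulLeft ℚ idE) 0)
        = (n - m) * (n - m + 1) / 2 ∧
    Module.finrank ℚ (Module.End.eigenspace (LinearMap.mulLeft ℚ idE) η)
        = (m - 1) * (n - m) ∧
    m * (m - 1) / 2 + (n - m) * (n - m + 1) / 2 + (m - 1) * (n - m) = n * (n - 1) / 2 ∧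
    Module.finrank ℚ A = n * (n - 1) / 2 :=
  idE_eigenvalues_and_dimensions_general n m hm3 hmn α ρ hmul_self hmul_comm hmul_ncomm hspan hindep
    hden η hη hη0 hη1 E hE idE hidE
end

section
/- If (G,D) is a k-regular 3-transposition group with 2 + αk ≠ 0, then the central charge of the Matsuo algebra A^α_3(G,D), defined as (1/2)⟨id_A, id_A⟩, equals |D|/(2+αk). -/
/-! Each row of the Gram matrix of the basis `ρ d` sums to `1 + αk/2` by `k`-regularity, so
`⟨Σ ρ d, Σ ρ d⟩ = |D| (1 + αk/2)`, and the normalising factor of `id_A` cancels one copy of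
`1 + αk/2`. -/

open Finset

theorem LinearMap.apply_sum_sum_eq_card_mul {ι R M : Type*} [CommSemiring R] [AddCommMonoid M]
    [Module R M] (B : M →ₗ[R] M →ₗ[R] R) (s : Finset ι) (v : ι → M) (r : R)
    (hrow : ∀ i ∈ s, ∑ j ∈ s, B (v i) (v j) = r) :
    B (∑ i ∈ s, v i) (∑ j ∈ s, v j) = #s * r := by
  simp only [map_sum, LinearMap.sum_apply]
  rw [Finset.sum_comm, Finset.sum_congr rfl hrow, Finset.sum_const, nsmul_eq_mul]

theorem matsuo_gram_row_sum {G K : Type*} [Mul G] [DecidableEq G]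
    [DecidableRel (Commute : G → G → Prop)] [DivisionRing K]
    (D : Finset G) (α : K) {c : G} (hc : c ∈ D) :
    ∑ d ∈ D, (if c = d then 1 else if Commute c d then 0 else α / 2)
      = 1 + #{d ∈ D | ¬ Commute d c} * (α / 2) := by
  have hsplit : ∀ d ∈ D, (if c = d then (1 : K) else if Commute c d then 0 else α / 2)
      = (if c = d then 1 else 0) + (if ¬ Commute d c then α / 2 else 0) := by
    intro d _
    by_cases hcd : c = d
    · subst hcd; simp
    · by_cases hcomm : Commute c d <;> simp [hcd, hcomm, Commute.symm_iff]
  rw [Finset.sum_congr rfl hsplit, Finset.sum_add_distrib, Finset.sum_ite_eq, if_pos hc,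
    ← Finset.sum_filter, Finset.sum_const, nsmul_eq_mul]

open scoped Classical in
theorem matsuo_central_charge_general {G A : Type*} [Group G]
    [NonUnitalNonAssocCommRing A] [Module ℚ A]
    (D : Finset G) (α : ℚ) (ρ : G → A)
    (B : A →ₗ[ℚ] A →ₗ[ℚ] ℚ)
    (hB : ∀ c ∈ D, ∀ d ∈ D,
      B (ρ c) (ρ d) = if c = d then 1 else if Commute c d then 0 else α / 2)
    (k : ℕ) (hreg : ∀ d ∈ D, (D.filter fun c => ¬ Commute c d).card = k)
    (hden : 2 + α * k ≠ 0)
    (idA : A) (hidA : idA = (1 + α * k / 2)⁻¹ • ∑ d ∈ D, ρ d) :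
    (1/2 : ℚ) * B idA idA = (D.card : ℚ) / (2 + α * k) := by
  have hrow : ∀ c ∈ D, ∑ d ∈ D, B (ρ c) (ρ d) = 1 + α * k / 2 := fun c hc => by
    rw [Finset.sum_congr rfl (hB c hc), matsuo_gram_row_sum D α hc, hreg c hc]
    ring
  have hhalf : 1 + α * k / 2 ≠ 0 := fun h => hden (by linarith)
  rw [hidA, map_smul, map_smul, LinearMap.smul_apply, smul_eq_mul, smul_eq_mul,
    LinearMap.apply_sum_sum_eq_card_mul B D ρ _ hrow]
  field_simp

open scoped Classical in
/-- if `(G,D)` is a `k`-regular 3-transposition group with `2+αk ≠ 0`,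
then the central charge `(1/2)⟨id_A, id_A⟩` of the Matsuo algebra `A^α_3(G,D)` equals
`|D|/(2+αk)`. -/
theorem matsuo_central_charge {G A : Type*} [Group G]
    [NonUnitalNonAssocCommRing A] [Module ℚ A] [SMulCommClass ℚ A A] [IsScalarTower ℚ A A]
    (D : Finset G) (α : ℚ) (hα0 : α ≠ 0) (hα1 : α ≠ 1) (ρ : G → A)
    (hinv : ∀ d ∈ D, d * d = 1) (hne1 : ∀ d ∈ D, d ≠ 1)
    (hnorm : ∀ c ∈ D, ∀ g : G, g⁻¹ * c * g ∈ D)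
    (h3trans : ∀ c ∈ D, ∀ d ∈ D, orderOf (c * d) ≤ 3)
    (B : A →ₗ[ℚ] A →ₗ[ℚ] ℚ)
    (hB : ∀ c ∈ D, ∀ d ∈ D,
      B (ρ c) (ρ d) = if c = d then 1 else if Commute c d then 0 else α / 2)
    (k : ℕ) (hreg : ∀ d ∈ D, (D.filter fun c => ¬ Commute c d).card = k)
    (hden : 2 + α * k ≠ 0)
    (idA : A) (hidA : idA = (1 + α * k / 2)⁻¹ • ∑ d ∈ D, ρ d) :
    (1/2 : ℚ) * B idA idA = (D.card : ℚ) / (2 + α * k) :=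
  matsuo_central_charge_general D α ρ B hB k hreg hden idA hidA
end

section
/- Let (K,F) ≤ (H,E) ≤ (G,D) be a chain of 3-transposition groups with F = K∩D, E = H∩D, and suppose (K,F) is k_F-regular and (H,E) is k_E-regular. Then in A^α_3(G,D), ⟨id_E, id_F⟩ = ⟨id_F, id_F⟩ = |F|/(1 + αk_F/2). -/
/-!
Expanding both identities, `⟨id_E, id_F⟩` and `⟨id_F, id_F⟩` are normalised double sums of
Matsuo form values. For fixed `f ∈ F` the inner sum over `E` (resp. `F`) is `1 + α k_E / 2`
(resp. `1 + α k_F / 2`): the term `e = f` contributes `1` and each of the `k` elements not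
commuting with `f` contributes `α / 2`. Both double sums thus equal `|F|` times the normalising
constant of the outer identity, which cancels.
-/

open Finset

open scoped Classical in
/-- The value `⟨c^ρ, d^ρ⟩` of the Matsuo form on two basis elements. -/
noncomputable def matsuoFormValue {G K : Type*} [Mul G] [DivisionRing K] (α : K) (c d : G) : K :=
  if c = d then 1 else if Commute c d then 0 else α / 2

open scoped Classical in
theorem sum_matsuoFormValue_eq {G K : Type*} [Mul G] [Field K] (α : K) {S : Finset G} {f : G}
    (hf : f ∈ S) :
    ∑ e ∈ S, matsuoFormValue α e f = 1 + α * #(S.filter fun c => ¬ Commute c f) / 2 := by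
  have hsplit : ∀ e, matsuoFormValue α e f =
      (if e = f then 1 else 0) + if ¬ Commute e f then α / 2 else 0 := by
    intro e
    unfold matsuoFormValue
    by_cases hef : e = f
    · simp [hef, Commute.refl]
    · by_cases hcomm : Commute e f <;> simp [hef, hcomm]
  rw [sum_congr rfl fun e _ => hsplit e, sum_add_distrib, sum_ite_eq' S f, if_pos hf,
    ← sum_filter, sum_const, nsmul_eq_mul]
  ring

theorem bilin_smul_sum_smul_sum {ι K M : Type*} [CommRing K] [AddCommGroup M] [Module K M]
    (B : M →ₗ[K] M →ₗ[K] K) (v : ι → M) (a b : K) (S T : Finset ι) :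
    B (a • ∑ s ∈ S, v s) (b • ∑ t ∈ T, v t) = a * b * ∑ t ∈ T, ∑ s ∈ S, B (v s) (v t) := by
  simp only [map_smul, map_sum, LinearMap.smul_apply, LinearMap.sum_apply,
    smul_eq_mul, ← mul_sum]
  ring

open scoped Classical in
theorem sum_sum_matsuoForm_of_regular {G K M : Type*} [Mul G] [Field K] [AddCommGroup M]
    [Module K M] (B : M →ₗ[K] M →ₗ[K] K) (ρ : G → M) (α : K) {D S T : Finset G}
    (hTS : T ⊆ S) (hSD : S ⊆ D)
    (hB : ∀ c ∈ D, ∀ d ∈ D, B (ρ c) (ρ d) = matsuoFormValue α c d) (k : ℕ)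
    (hreg : ∀ t ∈ T, #(S.filter fun c => ¬ Commute c t) = k) :
    ∑ t ∈ T, ∑ s ∈ S, B (ρ s) (ρ t) = #T * (1 + α * k / 2) := by
  have hrow : ∀ t ∈ T, ∑ s ∈ S, B (ρ s) (ρ t) = 1 + α * k / 2 := by
    intro t ht
    rw [sum_congr rfl fun s hs => hB s (hSD hs) t (hSD (hTS ht)),
      sum_matsuoFormValue_eq α (hTS ht), hreg t ht]
  rw [sum_congr rfl hrow, sum_const, nsmul_eq_mul]

open scoped Classical in
theorem matsuo_form_nested_identities_general {G A : Type*} [Group G]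
    [NonUnitalNonAssocCommRing A] [Module ℚ A]
    (D E F : Finset G) (hFE : F ⊆ E) (hED : E ⊆ D)
    (α : ℚ) (ρ : G → A)
    (B : A →ₗ[ℚ] A →ₗ[ℚ] ℚ)
    (hB : ∀ c ∈ D, ∀ d ∈ D,
      B (ρ c) (ρ d) = if c = d then 1 else if Commute c d then 0 else α / 2)
    (kE kF : ℕ)
    (hregE : ∀ e ∈ E, (E.filter fun c => ¬ Commute c e).card = kE)
    (hregF : ∀ f ∈ F, (F.filter fun c => ¬ Commute c f).card = kF)
    (hdenE : 1 + α * kE / 2 ≠ 0)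
    (idE idF : A)
    (hidE : idE = (1 + α * kE / 2)⁻¹ • ∑ e ∈ E, ρ e)
    (hidF : idF = (1 + α * kF / 2)⁻¹ • ∑ f ∈ F, ρ f) :
    B idE idF = B idF idF ∧ B idF idF = (F.card : ℚ) / (1 + α * kF / 2) := by
  have hB' : ∀ c ∈ D, ∀ d ∈ D, B (ρ c) (ρ d) = matsuoFormValue α c d := hB
  have hEF : B idE idF = #F / (1 + α * kF / 2) := by
    rw [hidE, hidF, bilin_smul_sum_smul_sum,
      sum_sum_matsuoForm_of_regular B ρ α hFE hED hB' kE fun f hf => hregE f (hFE hf)]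
    linear_combination (#F * (1 + α * kF / 2)⁻¹ : ℚ) * inv_mul_cancel₀ hdenE
  have hFF : B idF idF = #F / (1 + α * kF / 2) := by
    rw [hidF, bilin_smul_sum_smul_sum,
      sum_sum_matsuoForm_of_regular B ρ α subset_rfl (hFE.trans hED) hB' kF hregF]
    by_cases hdenF : 1 + α * kF / 2 = 0
    · simp [hdenF]
    · field_simp
  exact ⟨hEF.trans hFF.symm, hFF⟩

open scoped Classical in
/-- for a chain `(K,F) ≤ (H,E) ≤ (G,D)` of 3-transposition groups with
`(K,F)` `k_F`-regular and `(H,E)` `k_E`-regular, in `A^α_3(G,D)` one has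
`⟨id_E, id_F⟩ = ⟨id_F, id_F⟩ = |F|/(1+αk_F/2)`. -/
theorem matsuo_form_nested_identities {G A : Type*} [Group G]
    [NonUnitalNonAssocCommRing A] [Module ℚ A] [SMulCommClass ℚ A A] [IsScalarTower ℚ A A]
    (D E F : Finset G) (hFE : F ⊆ E) (hED : E ⊆ D)
    (α : ℚ) (hα0 : α ≠ 0) (hα1 : α ≠ 1) (ρ : G → A)
    (hinv : ∀ d ∈ D, d * d = 1) (hne1 : ∀ d ∈ D, d ≠ 1)
    (hnorm : ∀ c ∈ D, ∀ g : G, g⁻¹ * c * g ∈ D)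
    (h3trans : ∀ c ∈ D, ∀ d ∈ D, orderOf (c * d) ≤ 3)
    (B : A →ₗ[ℚ] A →ₗ[ℚ] ℚ)
    (hB : ∀ c ∈ D, ∀ d ∈ D,
      B (ρ c) (ρ d) = if c = d then 1 else if Commute c d then 0 else α / 2)
    (kE kF : ℕ)
    (hregE : ∀ e ∈ E, (E.filter fun c => ¬ Commute c e).card = kE)
    (hregF : ∀ f ∈ F, (F.filter fun c => ¬ Commute c f).card = kF)
    (hdenE : 1 + α * kE / 2 ≠ 0) (hdenF : 1 + α * kF / 2 ≠ 0)
    (idE idF : A)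
    (hidE : idE = (1 + α * kE / 2)⁻¹ • ∑ e ∈ E, ρ e)
    (hidF : idF = (1 + α * kF / 2)⁻¹ • ∑ f ∈ F, ρ f) :
    B idE idF = B idF idF ∧ B idF idF = (F.card : ℚ) / (1 + α * kF / 2) :=
  matsuo_form_nested_identities_general D E F hFE hED α ρ B hB kE kF hregE hregF hdenE idE idF hidE
    hidF
end

section
/- Let a,b,c,d be transpositions in D = D(A_{m-1}) ⊂ Sym(m) such that {a,b} and {c,d} are commuting pairs (⟨a,b⟩ ≅ ⟨c,d⟩ ≅ C₂×C₂) with equal 4-element support. Then v = α(a^ρ_+ + b^ρ_+ - c^ρ_+ - d^ρ_+) + (1-α)(a^ρ_- + b^ρ_- - c^ρ_- - d^ρ_-) is an eigenvector of ad(id_A) with eigenvalue \hat{η}(m) = α(m-1)/(1+α(m-2)) in \hat{A}^α_3(A_{m-1}). -/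
/-!
Let `S = ∑_{g ∈ D} g₊`, so that `id_A = S / (1 + α(m-2))`. For a transposition `x`, the only
nonzero product `g₊ x_ε` with `g` commuting with `x` is `x₊ x₊ = x₊`, and conjugation by `x`
permutes the set `N(x)` of the `2(m-2)` transpositions not commuting with `x`; hence
`S x_ε = [ε = +] x₊ + α(m-2) x_ε + (α/2) ∑_{g ∈ N(x)} (g₊ - g_ε)`.
Weighting each transposition `g` by `|supp g ∩ supp x|` gives
`∑_{g ∈ N(x)} g + 2x = ∑_{g ∈ D} |supp g ∩ supp x| g`. For the disjoint pairs `{a, b}` and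
`{c, d}` the weights add up to `|supp g ∩ (supp a ∪ supp b)|` on both sides, so
`∑_{N(a)} + ∑_{N(b)} - ∑_{N(c)} - ∑_{N(d)} = -2(a + b - c - d)` for either sign, and
`S v = α(m-1) v` follows.
-/

open Finset Equiv

namespace Equiv.Perm

open scoped Classical

variable {X : Type*} [DecidableEq X] [Fintype X]

theorem IsSwap.exists_eq_swap {g : Perm X} (hg : g.IsSwap) {p : X} (hp : p ∈ g.support) :
    ∃ q, q ≠ p ∧ g = swap p q := by
  obtain ⟨x, y, hxy, rfl⟩ := hg
  rw [support_swap hxy, mem_insert, mem_singleton] at hp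
  rcases hp with rfl | rfl
  · exact ⟨y, hxy.symm, rfl⟩
  · exact ⟨x, hxy, swap_comm _ _⟩

theorem IsSwap.commute_iff {g x : Perm X} (hg : g.IsSwap) (hx : x.IsSwap) :
    Commute g x ↔ g = x ∨ _root_.Disjoint g.support x.support := by
  refine ⟨fun hgx => or_iff_not_imp_right.2 fun hne => ?_, ?_⟩
  · obtain ⟨p, hpg, hpx⟩ := not_disjoint_iff.1 hne
    obtain ⟨q, hqp, rfl⟩ := hg.exists_eq_swap hpg
    obtain ⟨r, hrp, rfl⟩ := hx.exists_eq_swap hpx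
    by_contra hqr
    have h := congr($(hgx.eq) p)
    simp only [Perm.mul_apply, swap_apply_left] at h
    rw [swap_apply_of_ne_of_ne hrp fun h => hqr (by rw [h]),
      swap_apply_of_ne_of_ne hqp fun h => hqr (by rw [h])] at h
    exact hqr (by rw [h])
  · rintro (rfl | h)
    · exact Commute.refl g
    · exact (disjoint_iff_disjoint_support.2 h).commute

theorem IsSwap.card_support_inter {g x : Perm X} (hg : g.IsSwap) (hx : x.IsSwap) :
    #(g.support ∩ x.support) = (if Commute g x then 0 else 1) + if g = x then 2 else 0 := by
  by_cases hgx : g = x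
  · subst hgx
    simp [card_support_eq_two.2 hg]
  rw [if_neg hgx, add_zero]
  split_ifs with hc
  · exact card_eq_zero.2 <| disjoint_iff_inter_eq_empty.1 <|
      ((hg.commute_iff hx).1 hc).resolve_left hgx
  · obtain ⟨p, hpg, hpx⟩ := not_disjoint_iff.1 fun h => hc ((hg.commute_iff hx).2 (Or.inr h))
    obtain ⟨q, hqp, rfl⟩ := hg.exists_eq_swap hpg
    obtain ⟨r, hrp, rfl⟩ := hx.exists_eq_swap hpx
    have hqr : q ≠ r := by rintro rfl; exact hgx rfl
    rw [support_swap hqp.symm, support_swap hrp.symm, ← insert_inter_distrib,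
      singleton_inter_of_notMem (by simpa using hqr)]
    rfl

theorem IsSwap.disjoint_support_of_card_union_eq_four {a b : Perm X} (ha : a.IsSwap)
    (hb : b.IsSwap) (h : #(a.support ∪ b.support) = 4) : _root_.Disjoint a.support b.support := by
  rw [disjoint_iff_inter_eq_empty, ← card_eq_zero]
  have := card_union_add_card_inter a.support b.support
  rw [h, card_support_eq_two.2 ha, card_support_eq_two.2 hb] at this
  omega

theorem isSwap_conj_iff {g x : Perm X} : (x⁻¹ * g * x).IsSwap ↔ g.IsSwap := by
  rw [isSwap_iff_cycleType, isSwap_iff_cycleType, ← cycleType_conj (σ := g) (τ := x⁻¹), inv_inv]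

variable (X) in
noncomputable def swaps : Finset (Perm X) := {g | g.IsSwap}

noncomputable def noncommSwaps (x : Perm X) : Finset (Perm X) := {g ∈ swaps X | ¬Commute g x}

@[simp]
theorem mem_swaps {g : Perm X} : g ∈ swaps X ↔ g.IsSwap := by
  simp [swaps]

@[simp]
theorem mem_noncommSwaps {g x : Perm X} : g ∈ noncommSwaps x ↔ g.IsSwap ∧ ¬Commute g x := by
  simp [noncommSwaps]

theorem card_swaps_mem_support_add_one (p : X) :
    #{g ∈ swaps X | p ∈ g.support} + 1 = Fintype.card X := by
  have himage : {g ∈ swaps X | p ∈ g.support} = (univ.erase p).image (swap p) := by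
    ext g
    simp only [mem_filter, mem_swaps, mem_image, mem_erase, mem_univ, and_true]
    constructor
    · rintro ⟨hg, hp⟩
      obtain ⟨q, hqp, rfl⟩ := hg.exists_eq_swap hp
      exact ⟨q, hqp, rfl⟩
    · rintro ⟨q, hqp, rfl⟩
      exact ⟨⟨p, q, hqp.symm, rfl⟩, by simp [support_swap hqp.symm]⟩
  have hinj : Function.Injective (swap p) := fun q r h => by simpa using congr($h p)
  rw [himage, card_image_of_injective _ hinj, card_erase_add_one (mem_univ p), card_univ]

theorem sum_card_support_inter_swaps_add_two {x : Perm X} (hx : x.IsSwap) :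
    ∑ g ∈ swaps X, #(g.support ∩ x.support) + 2 = 2 * Fintype.card X := by
  have hcount := sum_card_bipartiteAbove_eq_sum_card_bipartiteBelow
    (fun (g : Perm X) p => p ∈ g.support) (s := swaps X) (t := x.support)
  simp only [bipartiteAbove, bipartiteBelow, filter_mem_eq_inter, inter_comm x.support] at hcount
  calc ∑ g ∈ swaps X, #(g.support ∩ x.support) + 2
      = ∑ p ∈ x.support, (#{g ∈ swaps X | p ∈ g.support} + 1) := by
        rw [hcount, sum_add_distrib, sum_const, card_support_eq_two.2 hx, smul_eq_mul, mul_one]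
    _ = 2 * Fintype.card X := by
        simp only [card_swaps_mem_support_add_one, sum_const, card_support_eq_two.2 hx, smul_eq_mul]

section Weights

variable {M : Type*} [AddCommMonoid M]

theorem sum_noncommSwaps_add_two_smul {x : Perm X} (hx : x.IsSwap) (f : Perm X → M) :
    ∑ g ∈ noncommSwaps x, f g + 2 • f x = ∑ g ∈ swaps X, #(g.support ∩ x.support) • f g := by
  have hx' : x ∈ swaps X := mem_swaps.2 hx
  calc ∑ g ∈ noncommSwaps x, f g + 2 • f x
      = ∑ g ∈ swaps X,
          ((if Commute g x then 0 else 1) • f g + (if g = x then 2 else 0) • f g) := by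
        simp [sum_add_distrib, ite_smul, noncommSwaps, sum_filter, hx']
    _ = _ := sum_congr rfl fun g hg => by
        rw [(mem_swaps.1 hg).card_support_inter hx, add_smul]

theorem sum_noncommSwaps_add_sum_noncommSwaps {a b : Perm X} (ha : a.IsSwap) (hb : b.IsSwap)
    (hab : _root_.Disjoint a.support b.support) (f : Perm X → M) :
    ∑ g ∈ noncommSwaps a, f g + ∑ g ∈ noncommSwaps b, f g + 2 • (f a + f b)
      = ∑ g ∈ swaps X, #(g.support ∩ (a.support ∪ b.support)) • f g := by
  calc ∑ g ∈ noncommSwaps a, f g + ∑ g ∈ noncommSwaps b, f g + 2 • (f a + f b)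
      = (∑ g ∈ noncommSwaps a, f g + 2 • f a) + (∑ g ∈ noncommSwaps b, f g + 2 • f b) := by
        rw [smul_add]; abel
    _ = ∑ g ∈ swaps X, (#(g.support ∩ a.support) • f g + #(g.support ∩ b.support) • f g) := by
        rw [sum_noncommSwaps_add_two_smul ha, sum_noncommSwaps_add_two_smul hb, sum_add_distrib]
    _ = _ := sum_congr rfl fun g _ => by
        rw [inter_union_distrib_left,
          card_union_of_disjoint (hab.mono inter_subset_right inter_subset_right), add_smul]

theorem sum_noncommSwaps_conj (x : Perm X) (f : Perm X → M) :
    ∑ g ∈ noncommSwaps x, f (x⁻¹ * g * x) = ∑ g ∈ noncommSwaps x, f g := by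
  have hcomm (g : Perm X) : Commute (x⁻¹ * g * x) x ↔ Commute g x := by
    simpa using Commute.conj_iff (a := g) (b := x) x⁻¹
  exact sum_equiv (MulAut.conj x⁻¹).toEquiv
    (fun g => by simp [isSwap_conj_iff, hcomm]) (fun g _ => by simp)

end Weights

theorem card_noncommSwaps_add_four {x : Perm X} (hx : x.IsSwap) :
    #(noncommSwaps x) + 4 = 2 * Fintype.card X := by
  have := sum_noncommSwaps_add_two_smul hx (fun _ => 1)
  simp only [sum_const, smul_eq_mul, mul_one] at this
  rw [← sum_card_support_inter_swaps_add_two hx, ← this]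

end Equiv.Perm

open Equiv.Perm

/-- `ρ ε g` is the basis vector `g^ρ_ε` of the extended Matsuo algebra, `ε = true` standing
for `+`. -/
structure IsExtendedMatsuoBasis {X : Type*} [DecidableEq X] {A : Type*} [NonUnitalNonAssocRing A]
    [Module ℚ A] (α : ℚ) (ρ : Bool → Perm X → A) : Prop where
  mul_self : ∀ g : Perm X, g.IsSwap → ∀ ε : Bool, ρ ε g * ρ ε g = ρ ε g
  mul_of_commute : ∀ g h : Perm X, g.IsSwap → h.IsSwap → ∀ ε ε' : Bool,
    ¬ (g = h ∧ ε = ε') → Commute g h → ρ ε g * ρ ε' h = 0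
  mul_of_not_commute : ∀ g h : Perm X, g.IsSwap → h.IsSwap → ∀ ε ε' : Bool,
    ¬ Commute g h → ρ ε g * ρ ε' h = (α / 2) • (ρ ε g + ρ ε' h - ρ (ε == ε') (h⁻¹ * g * h))

namespace IsExtendedMatsuoBasis

open scoped Classical

variable {X : Type*} [DecidableEq X] [Fintype X] {A : Type*} [NonUnitalNonAssocRing A]
  [Module ℚ A] {α : ℚ} {ρ : Bool → Perm X → A}

theorem sum_swaps_mul (hρ : IsExtendedMatsuoBasis α ρ) {x : Perm X} (hx : x.IsSwap) (ε : Bool) :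
    (∑ g ∈ swaps X, ρ true g) * ρ ε x
      = (if ε then ρ true x else 0) + (α * (Fintype.card X - 2)) • ρ ε x
        + (α / 2) • (∑ g ∈ noncommSwaps x, ρ true g - ∑ g ∈ noncommSwaps x, ρ ε g) := by
  have hcommuting : ∑ g ∈ swaps X with Commute g x, ρ true g * ρ ε x
      = if ε then ρ true x else 0 := by
    have hzero (g : Perm X) (hg : g ∈ swaps X ∧ Commute g x) (hgx : g ≠ x) :
        ρ true g * ρ ε x = 0 :=
      hρ.mul_of_commute g x (mem_swaps.1 hg.1) hx true ε (fun h => hgx h.1) hg.2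
    rw [sum_eq_single_of_mem x (by simp [hx]) fun g hg => hzero g (mem_filter.1 hg)]
    cases ε
    · exact hρ.mul_of_commute x x hx hx true false (by simp) (Commute.refl x)
    · exact hρ.mul_self x hx true
  have hnoncommuting : ∑ g ∈ noncommSwaps x, ρ true g * ρ ε x
      = (α / 2) • (∑ g ∈ noncommSwaps x, ρ true g + #(noncommSwaps x) • ρ ε x
          - ∑ g ∈ noncommSwaps x, ρ ε g) := by
    have hprod (g : Perm X) (hg : g ∈ noncommSwaps x) :
        ρ true g * ρ ε x = (α / 2) • (ρ true g + ρ ε x - ρ ε (x⁻¹ * g * x)) := by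
      simpa using hρ.mul_of_not_commute g x (mem_noncommSwaps.1 hg).1 hx true ε
        (mem_noncommSwaps.1 hg).2
    rw [sum_congr rfl hprod, ← smul_sum, sum_sub_distrib, sum_add_distrib, sum_const,
      sum_noncommSwaps_conj]
  have hcard : (#(noncommSwaps x) : ℚ) = 2 * (Fintype.card X - 2) := by
    have h : (#(noncommSwaps x) : ℚ) + 4 = 2 * Fintype.card X := by
      exact_mod_cast card_noncommSwaps_add_four hx
    linarith
  rw [sum_mul, ← sum_filter_add_sum_filter_not (swaps X) (Commute · x), hcommuting, ← noncommSwaps,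
    hnoncommuting, ← Nat.cast_smul_eq_nsmul ℚ, hcard]
  module

theorem sum_swaps_mul_eigenvector [SMulCommClass ℚ A A] (hρ : IsExtendedMatsuoBasis α ρ)
    {a b c d : Perm X} (ha : a.IsSwap) (hb : b.IsSwap) (hc : c.IsSwap) (hd : d.IsSwap)
    (hab : Disjoint a.support b.support) (hcd : Disjoint c.support d.support)
    (hsupp : a.support ∪ b.support = c.support ∪ d.support) :
    (∑ g ∈ swaps X, ρ true g) * (α • (ρ true a + ρ true b - ρ true c - ρ true d)
        + (1 - α) • (ρ false a + ρ false b - ρ false c - ρ false d))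
      = (α * (Fintype.card X - 1)) • (α • (ρ true a + ρ true b - ρ true c - ρ true d)
        + (1 - α) • (ρ false a + ρ false b - ρ false c - ρ false d)) := by
  have hbalance (ε : Bool) := (sum_noncommSwaps_add_sum_noncommSwaps ha hb hab (ρ ε)).trans
    (hsupp ▸ sum_noncommSwaps_add_sum_noncommSwaps hc hd hcd (ρ ε)).symm
  simp only [mul_add, mul_sub, mul_smul_comm, hρ.sum_swaps_mul, ha, hb, hc, hd,
    Bool.false_eq_true, if_true, if_false]
  linear_combination (norm := module)
    ((1 - α) * (α / 2)) • hbalance true - ((1 - α) * (α / 2)) • hbalance false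

end IsExtendedMatsuoBasis

open scoped Classical in
theorem extended_matsuo_hat_eigenvector_general
    {A : Type*} [NonUnitalNonAssocCommRing A]
    [Module ℚ A] [SMulCommClass ℚ A A] [IsScalarTower ℚ A A]
    (m : ℕ) (α : ℚ)
    (ρ : Bool → Equiv.Perm (Fin m) → A)
    (hmul_self : ∀ g : Perm (Fin m), g.IsSwap → ∀ ε : Bool, ρ ε g * ρ ε g = ρ ε g)
    (hmul_comm : ∀ g h : Perm (Fin m), g.IsSwap → h.IsSwap → ∀ ε ε' : Bool,
      ¬ (g = h ∧ ε = ε') → Commute g h → ρ ε g * ρ ε' h = 0)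
    (hmul_ncomm : ∀ g h : Perm (Fin m), g.IsSwap → h.IsSwap → ∀ ε ε' : Bool,
      ¬ Commute g h →
      ρ ε g * ρ ε' h = (α/2) • (ρ ε g + ρ ε' h - ρ (ε == ε') (h⁻¹ * g * h)))
    (idA : A)
    (hidA : idA = (1 + α * ((m : ℚ) - 2))⁻¹ •
      ∑ g ∈ univ.filter (fun g : Perm (Fin m) => g.IsSwap), ρ true g)
    (a b c d : Perm (Fin m))
    (ha : a.IsSwap) (hb : b.IsSwap) (hc : c.IsSwap) (hd : d.IsSwap)
    (hsupp : a.support ∪ b.support = c.support ∪ d.support)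
    (hsupp4 : (a.support ∪ b.support).card = 4)
    (v : A)
    (hv : v = α • (ρ true a + ρ true b - ρ true c - ρ true d)
            + (1 - α) • (ρ false a + ρ false b - ρ false c - ρ false d)) :
    idA * v = (α * ((m : ℚ) - 1) / (1 + α * ((m : ℚ) - 2))) • v := by
  have hρ : IsExtendedMatsuoBasis α ρ := ⟨hmul_self, hmul_comm, hmul_ncomm⟩
  have hS := hρ.sum_swaps_mul_eigenvector ha hb hc hd
    (ha.disjoint_support_of_card_union_eq_four hb hsupp4)
    (hc.disjoint_support_of_card_union_eq_four hd (hsupp ▸ hsupp4)) hsupp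
  rw [Fintype.card_fin] at hS
  rw [hidA, hv, smul_mul_assoc, ← swaps, hS, smul_smul, inv_mul_eq_div]

open scoped Classical in
/-- in the extended Matsuo algebra `Â^α_3(A_{m-1})` (on the transpositions
of `Sym(m)`), if `{a,b}` and `{c,d}` are commuting pairs of transpositions with equal
4-element support, then
`v = α(a₊+b₊-c₊-d₊) + (1-α)(a₋+b₋-c₋-d₋)` is an eigenvector of `ad(id_A)` with
eigenvalue `η̂(m) = α(m-1)/(1+α(m-2))`. -/
theorem extended_matsuo_hat_eigenvector
    {A : Type*} [NonUnitalNonAssocCommRing A]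
    [Module ℚ A] [SMulCommClass ℚ A A] [IsScalarTower ℚ A A]
    (m : ℕ) (α : ℚ) (hα0 : α ≠ 0) (hα1 : α ≠ 1)
    (ρ : Bool → Equiv.Perm (Fin m) → A)
    (hmul_self : ∀ g : Perm (Fin m), g.IsSwap → ∀ ε : Bool, ρ ε g * ρ ε g = ρ ε g)
    (hmul_comm : ∀ g h : Perm (Fin m), g.IsSwap → h.IsSwap → ∀ ε ε' : Bool,
      ¬ (g = h ∧ ε = ε') → Commute g h → ρ ε g * ρ ε' h = 0)
    (hmul_ncomm : ∀ g h : Perm (Fin m), g.IsSwap → h.IsSwap → ∀ ε ε' : Bool,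
      ¬ Commute g h →
      ρ ε g * ρ ε' h = (α/2) • (ρ ε g + ρ ε' h - ρ (ε == ε') (h⁻¹ * g * h)))
    (hden : 1 + α * ((m : ℚ) - 2) ≠ 0)
    (idA : A)
    (hidA : idA = (1 + α * ((m : ℚ) - 2))⁻¹ •
      ∑ g ∈ univ.filter (fun g : Perm (Fin m) => g.IsSwap), ρ true g)
    (a b c d : Perm (Fin m))
    (ha : a.IsSwap) (hb : b.IsSwap) (hc : c.IsSwap) (hd : d.IsSwap)
    (hab : a ≠ b) (habc : Commute a b) (hcd : c ≠ d) (hcdc : Commute c d)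
    (hsupp : a.support ∪ b.support = c.support ∪ d.support)
    (hsupp4 : (a.support ∪ b.support).card = 4)
    (v : A)
    (hv : v = α • (ρ true a + ρ true b - ρ true c - ρ true d)
            + (1 - α) • (ρ false a + ρ false b - ρ false c - ρ false d)) :
    idA * v = (α * ((m : ℚ) - 1) / (1 + α * ((m : ℚ) - 2))) • v :=
  extended_matsuo_hat_eigenvector_general m α ρ hmul_self hmul_comm hmul_ncomm idA hidA a b c d ha
    hb hc hd hsupp hsupp4 v hv
end
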